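/- arXiv:2312.16919 — 7 statements merged into one kernel-verified Lean document; each statement's English description precedes it below -/
import Mathlib

section
/- Let Φ : 𝔽_q[X,Y] → 𝔽_q(t) be the 𝔽_q-algebra homomorphism determined by Φ(X) = 1/π and Φ(Y) = t/π. Then the kernel of Φ is the principal ideal generated by ρ(X,Y) = Y² − Tr(ζ)·XY + ζ^{q+1}·X² − X, and the image of Φ is exactly the set of rational functions of the form F(t)/π^d with F ∈ 𝔽_q[t], d ≥ 0 and deg F ≤ 2d. In particular the coordinate ring 𝒜 of the π-truncated projective line is isomorphic as an 𝔽_q-algebra to 𝔽_q[X,Y]/(ρ(X,Y)). -/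
/-!
Since `ρ` is monic in `Y`, every polynomial is congruent modulo `ρ` to some `g(X) + h(X) Y`, and
such a remainder is killed by `Φ` only if `g = h = 0`: multiplying `g(1/π) + h(1/π) t/π = 0` by a
power of `π` gives `G(π) π + H(π) t = 0` with `G`, `H` the reversed polynomials, and the two
summands have degrees of different parity.

The fractions `F / π ^ d` with `deg F ≤ 2 d` form a subalgebra containing `x` and `y`. Conversely,
dividing `F` by `π` with remainder `r₀ + r₁ t` gives
`F / π ^ d = (F div π) / π ^ (d - 1) + (r₀ x + r₁ y) x ^ (d - 1)`, so induction on `d` shows that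
every such fraction is a polynomial in `x` and `y`.
-/

noncomputable section

namespace TruncatedLine

open Polynomial

variable {K : Type*} [Field K]

theorem eq_zero_of_comp_mul_add_comp_mul_X_eq_zero {π G H : K[X]} (hπ : Even π.natDegree)
    (hπ0 : π.natDegree ≠ 0) (h : G.comp π * π + H.comp π * X = 0) : G = 0 ∧ H = 0 := by
  have hπne : π ≠ 0 := by rintro rfl; simp at hπ0
  have hπC : π ≠ C (π.coeff 0) := fun hC => hπ0 (by rw [hC, natDegree_C])
  have hHπ : H.comp π = 0 := by
    by_contra hH
    have hdeg : (G.comp π * π).natDegree = (H.comp π * X).natDegree := by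
      rw [eq_neg_of_add_eq_zero_left h, natDegree_neg]
    have heven : Even (G.comp π * π).natDegree := by
      by_cases hG : G.comp π = 0
      · simp [hG]
      · rw [natDegree_mul hG hπne, natDegree_comp]
        exact (hπ.mul_left _).add hπ
    rw [hdeg, natDegree_mul hH X_ne_zero, natDegree_X, natDegree_comp] at heven
    exact Nat.not_even_iff_odd.mpr (Even.add_one (hπ.mul_left _)) heven
  have hGπ : G.comp π = 0 := by simpa [hHπ, hπne] using h
  simp only [comp_eq_zero_iff, hπC, and_false, or_false] at hGπ hHπ
  exact ⟨hGπ, hHπ⟩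

theorem aeval_inv_mul_pow {L : Type*} [Field L] [Algebra K L] {u : L} (hu : u ≠ 0) {N : ℕ}
    {f : K[X]} (hf : f.natDegree ≤ N) : aeval u⁻¹ f * u ^ N = aeval u (reflect N f) := by
  have : Invertible u := invertibleOfNonzero hu
  simpa [aeval_def, invOf_eq_inv] using
    eval₂_reflect_mul_pow (algebraMap K L) u N (reflect N f)
      (natDegree_reflect_le.trans (max_le le_rfl hf))

def x (π : K[X]) : RatFunc K := (algebraMap K[X] (RatFunc K) π)⁻¹

def y (π : K[X]) : RatFunc K := RatFunc.X * x π

theorem eq_zero_of_aeval_x_add_aeval_x_mul_y_eq_zero {π : K[X]} (hπ : Even π.natDegree)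
    (hπ0 : π.natDegree ≠ 0) {g h : K[X]} (H : aeval (x π) g + aeval (x π) h * y π = 0) :
    g = 0 ∧ h = 0 := by
  have hπne : π ≠ 0 := by rintro rfl; simp at hπ0
  set P := algebraMap K[X] (RatFunc K) π
  have hP : P ≠ 0 := RatFunc.algebraMap_ne_zero hπne
  set N := max g.natDegree h.natDegree
  have hpoly : (reflect N g).comp π * π + (reflect N h).comp π * X = 0 := by
    apply RatFunc.algebraMap_injective K
    simp only [map_add, map_mul, map_zero, comp_eq_aeval, ← aeval_algebraMap_apply,
      RatFunc.algebraMap_X]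
    rw [← aeval_inv_mul_pow hP (le_max_left _ _), ← aeval_inv_mul_pow hP (le_max_right _ _)]
    simp only [x, y] at H
    linear_combination P ^ (N + 1) * H - aeval P⁻¹ h * P ^ N * RatFunc.X * inv_mul_cancel₀ hP
  simpa using eq_zero_of_comp_mul_add_comp_mul_X_eq_zero hπ hπ0 hpoly

def eval (π : K[X]) : MvPolynomial (Fin 2) K →ₐ[K] RatFunc K := MvPolynomial.aeval ![x π, y π]

@[simp]
theorem eval_X_zero (π : K[X]) : eval π (MvPolynomial.X 0) = x π := by simp [eval]

@[simp]
theorem eval_X_one (π : K[X]) : eval π (MvPolynomial.X 1) = y π := by simp [eval]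

def relation (a b : K) : MvPolynomial (Fin 2) K :=
  MvPolynomial.X 1 ^ 2 - MvPolynomial.C a * MvPolynomial.X 0 * MvPolynomial.X 1
    + MvPolynomial.C b * MvPolynomial.X 0 ^ 2 - MvPolynomial.X 0

theorem natDegree_X_sq_sub_C_mul_X_add_C (a b : K) : (X ^ 2 - C a * X + C b).natDegree = 2 := by
  compute_degree!

theorem monic_X_sq_sub_C_mul_X_add_C (a b : K) : (X ^ 2 - C a * X + C b).Monic := by
  monicity!

theorem eval_relation (a b : K) : eval (X ^ 2 - C a * X + C b) (relation a b) = 0 := by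
  set π : K[X] := X ^ 2 - C a * X + C b
  set P := algebraMap K[X] (RatFunc K) π
  have hP0 : P ≠ 0 := RatFunc.algebraMap_ne_zero (monic_X_sq_sub_C_mul_X_add_C a b).ne_zero
  have hP : P = RatFunc.X ^ 2 - RatFunc.C a * RatFunc.X + RatFunc.C b := by
    simp [P, π, RatFunc.algebraMap_X, RatFunc.algebraMap_C]
  simp only [relation, map_add, map_sub, map_mul, map_pow, MvPolynomial.algHom_C, eval_X_zero,
    eval_X_one, y, x, RatFunc.algebraMap_eq_C]
  linear_combination (-P⁻¹ ^ 2) * hP + P⁻¹ * inv_mul_cancel₀ hP0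

theorem exists_relation_dvd_sub (a b : K) (p : MvPolynomial (Fin 2) K) :
    ∃ g h : K[X], relation a b ∣
      p - (aeval (MvPolynomial.X 0) g + aeval (MvPolynomial.X 0) h * MvPolynomial.X 1) := by
  induction p using MvPolynomial.induction_on with
  | C c => exact ⟨C c, 0, by simp⟩
  | add p q hp hq =>
    obtain ⟨g₁, h₁, hpq⟩ := hp
    obtain ⟨g₂, h₂, hq⟩ := hq
    refine ⟨g₁ + g₂, h₁ + h₂, ?_⟩
    convert hpq.add hq using 1
    simp only [map_add]
    ring
  | mul_X p i hp =>
    obtain ⟨g, h, c, hc⟩ := hp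
    fin_cases i <;> simp only [Fin.zero_eta, Fin.mk_one]
    · refine ⟨g * X, h * X, c * MvPolynomial.X 0, ?_⟩
      simp only [map_mul, aeval_X]
      linear_combination MvPolynomial.X 0 * hc
    · refine ⟨h * (X - C b * X ^ 2), g + C a * X * h,
        c * MvPolynomial.X 1 + aeval (MvPolynomial.X 0) h, ?_⟩
      simp only [relation] at hc ⊢
      simp only [map_add, map_mul, map_sub, map_pow, aeval_X, aeval_C, MvPolynomial.algebraMap_eq]
      linear_combination MvPolynomial.X 1 * hc

theorem ker_eval (a b : K) :
    RingHom.ker (eval (X ^ 2 - C a * X + C b)) = Ideal.span {relation a b} := by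
  have hd := natDegree_X_sq_sub_C_mul_X_add_C a b
  refine le_antisymm (fun p hp => ?_) ?_
  · obtain ⟨g, h, c, hc⟩ := exists_relation_dvd_sub a b p
    have hgh := congrArg (eval (X ^ 2 - C a * X + C b)) hc
    simp only [map_sub, map_add, map_mul, RingHom.mem_ker.mp hp, eval_relation,
      ← aeval_algHom_apply, eval_X_zero, eval_X_one, zero_sub, zero_mul, neg_eq_zero] at hgh
    obtain ⟨rfl, rfl⟩ :=
      eq_zero_of_aeval_x_add_aeval_x_mul_y_eq_zero (by simp [hd]) (by simp [hd]) hgh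
    exact Ideal.mem_span_singleton'.mpr ⟨c, by simpa [mul_comm] using hc.symm⟩
  · rw [Ideal.span_le, Set.singleton_subset_iff]
    exact eval_relation a b

/-- The functions on `ℙ¹` whose poles lie among the zeros of `π` (none at `∞`). -/
def regularAwayFrom (π : K[X]) (hπ : π ≠ 0) : Subalgebra K (RatFunc K) where
  carrier := {u | ∃ (F : K[X]) (d : ℕ), F.natDegree ≤ π.natDegree * d ∧
    u = algebraMap K[X] (RatFunc K) F / algebraMap K[X] (RatFunc K) π ^ d}
  mul_mem' := by
    rintro _ _ ⟨F₁, d₁, h₁, rfl⟩ ⟨F₂, d₂, h₂, rfl⟩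
    refine ⟨F₁ * F₂, d₁ + d₂,
      natDegree_mul_le.trans (mul_add π.natDegree d₁ d₂ ▸ add_le_add h₁ h₂), ?_⟩
    rw [map_mul, pow_add, div_mul_div_comm]
  add_mem' := by
    rintro _ _ ⟨F₁, d₁, h₁, rfl⟩ ⟨F₂, d₂, h₂, rfl⟩
    have hP (n : ℕ) := pow_ne_zero n (RatFunc.algebraMap_ne_zero hπ)
    refine ⟨F₁ * π ^ d₂ + F₂ * π ^ d₁, d₁ + d₂, ?_, ?_⟩
    · refine natDegree_add_le_of_degree_le (natDegree_mul_le.trans ?_) (natDegree_mul_le.trans ?_)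
      · rw [natDegree_pow]; nlinarith
      · rw [natDegree_pow]; nlinarith
    · rw [div_add_div _ _ (hP d₁) (hP d₂)]
      simp only [map_add, map_mul, map_pow, pow_add]
      ring
  algebraMap_mem' c := ⟨C c, 0, by simp, by simp [RatFunc.algebraMap_C, RatFunc.algebraMap_eq_C]⟩

theorem coe_regularAwayFrom (π : K[X]) (hπ : π ≠ 0) :
    (regularAwayFrom π hπ : Set (RatFunc K)) = {u | ∃ (F : K[X]) (d : ℕ),
      F.natDegree ≤ π.natDegree * d ∧
        u = algebraMap K[X] (RatFunc K) F / algebraMap K[X] (RatFunc K) π ^ d} :=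
  rfl

theorem range_eval_eq_adjoin (π : K[X]) : (eval π).range = Algebra.adjoin K {x π, y π} := by
  rw [eval, MvPolynomial.aeval_range, Matrix.range_cons_cons_empty]

theorem range_eval_le {π : K[X]} (hπ : π ≠ 0) (hd : 1 ≤ π.natDegree) :
    (eval π).range ≤ regularAwayFrom π hπ := by
  rw [range_eval_eq_adjoin, Algebra.adjoin_le_iff, Set.insert_subset_iff,
    Set.singleton_subset_iff]
  exact ⟨⟨1, 1, by simp, by simp [x]⟩,
    ⟨X, 1, by simpa using hd, by simp [x, y, RatFunc.algebraMap_X, div_eq_mul_inv]⟩⟩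

theorem algebraMap_div_pow_mem_range_eval {π : K[X]} (hm : π.Monic) (hd : π.natDegree = 2)
    {d : ℕ} {F : K[X]} (hF : F.natDegree ≤ 2 * d) :
    algebraMap K[X] (RatFunc K) F / algebraMap K[X] (RatFunc K) π ^ d ∈ (eval π).range := by
  have hx : x π ∈ (eval π).range := ⟨MvPolynomial.X 0, eval_X_zero π⟩
  have hy : y π ∈ (eval π).range := ⟨MvPolynomial.X 1, eval_X_one π⟩
  induction d generalizing F with
  | zero =>
    rw [eq_C_of_natDegree_le_zero hF]
    simp [RatFunc.algebraMap_C, ← RatFunc.algebraMap_eq_C]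
  | succ d ih =>
    have hq : (F /ₘ π).natDegree ≤ 2 * d := by rw [natDegree_divByMonic F hm, hd]; omega
    have hr := eq_X_add_C_of_natDegree_le_one (p := F %ₘ π) (by
      have := natDegree_modByMonic_lt F hm (by rintro rfl; simp at hd)
      omega)
    have hP := RatFunc.algebraMap_ne_zero hm.ne_zero
    have hsplit : algebraMap K[X] (RatFunc K) F / algebraMap K[X] (RatFunc K) π ^ (d + 1) =
        algebraMap K[X] (RatFunc K) (F /ₘ π) / algebraMap K[X] (RatFunc K) π ^ d +
          (algebraMap K (RatFunc K) ((F %ₘ π).coeff 1) * y π +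
            algebraMap K (RatFunc K) ((F %ₘ π).coeff 0) * x π) * x π ^ d := by
      conv_lhs => rw [← modByMonic_add_div F π, hr]
      simp only [x, y, map_add, map_mul, RatFunc.algebraMap_C, RatFunc.algebraMap_X,
        RatFunc.algebraMap_eq_C, inv_pow]
      field_simp
      ring
    rw [hsplit]
    exact add_mem (ih hq) (mul_mem (add_mem (mul_mem (Subalgebra.algebraMap_mem _ _) hy)
      (mul_mem (Subalgebra.algebraMap_mem _ _) hx)) (pow_mem hx d))

theorem range_eval {π : K[X]} (hm : π.Monic) (hd : π.natDegree = 2) :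
    (eval π).range = regularAwayFrom π hm.ne_zero := by
  refine le_antisymm (range_eval_le hm.ne_zero (by omega)) ?_
  rintro _ ⟨F, d, hF, rfl⟩
  exact algebraMap_div_pow_mem_range_eval hm hd (hd ▸ hF)

end TruncatedLine

end

open TruncatedLine in
theorem stmt0_general {Fq : Type*} [Field Fq] (a b : Fq) :
    let π : Polynomial Fq := Polynomial.X ^ 2 - Polynomial.C a * Polynomial.X + Polynomial.C b
    let x : RatFunc Fq := (algebraMap (Polynomial Fq) (RatFunc Fq) π)⁻¹
    let y : RatFunc Fq := RatFunc.X * x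
    let Φ : MvPolynomial (Fin 2) Fq →ₐ[Fq] RatFunc Fq := MvPolynomial.aeval ![x, y]
    let ρ : MvPolynomial (Fin 2) Fq :=
      MvPolynomial.X 1 ^ 2 - MvPolynomial.C a * MvPolynomial.X 0 * MvPolynomial.X 1
        + MvPolynomial.C b * MvPolynomial.X 0 ^ 2 - MvPolynomial.X 0
    RingHom.ker (Φ : MvPolynomial (Fin 2) Fq →+* RatFunc Fq) = Ideal.span {ρ} ∧
      Set.range Φ = {u : RatFunc Fq | ∃ (P : Polynomial Fq) (d : ℕ), P.natDegree ≤ 2 * d ∧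
        u = algebraMap (Polynomial Fq) (RatFunc Fq) P /
          algebraMap (Polynomial Fq) (RatFunc Fq) π ^ d} ∧
      Nonempty ((MvPolynomial (Fin 2) Fq ⧸ Ideal.span {ρ}) ≃ₐ[Fq]
        Algebra.adjoin Fq ({x, y} : Set (RatFunc Fq))) := by
  intro π x y Φ ρ
  have hker : RingHom.ker Φ = Ideal.span {ρ} := ker_eval a b
  have hrange :=
    range_eval (monic_X_sq_sub_C_mul_X_add_C a b) (natDegree_X_sq_sub_C_mul_X_add_C a b)
  refine ⟨hker, ?_, ?_⟩
  · rw [← AlgHom.coe_range]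
    change ((eval π).range : Set (RatFunc Fq)) = _
    rw [hrange, coe_regularAwayFrom, natDegree_X_sq_sub_C_mul_X_add_C]
  · exact ⟨(Ideal.quotientEquivAlgOfEq Fq hker.symm).trans <|
      (Ideal.quotientKerEquivRange Φ).trans (Subalgebra.equivOfEq _ _ (range_eval_eq_adjoin π))⟩

/-- The coordinate ring of the `π`-truncated projective line: kernel and image of
the evaluation map `Φ : 𝔽_q[X,Y] → 𝔽_q(t)`, `X ↦ 1/π`, `Y ↦ t/π`. -/
theorem stmt0 {Fq E : Type*} [Field Fq] [Fintype Fq] [Field E] [Algebra Fq E]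
    (q : ℕ) (hq : Fintype.card Fq = q)
    (ζ : E) (hζ : ζ ^ q ≠ ζ) (hζ2 : ζ ^ q ^ 2 = ζ)
    (a b : Fq) (ha : algebraMap Fq E a = ζ + ζ ^ q) (hb : algebraMap Fq E b = ζ ^ (q + 1)) :
    let π : Polynomial Fq := Polynomial.X ^ 2 - Polynomial.C a * Polynomial.X + Polynomial.C b
    let x : RatFunc Fq := (algebraMap (Polynomial Fq) (RatFunc Fq) π)⁻¹
    let y : RatFunc Fq := RatFunc.X * x
    let Φ : MvPolynomial (Fin 2) Fq →ₐ[Fq] RatFunc Fq := MvPolynomial.aeval ![x, y]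
    let ρ : MvPolynomial (Fin 2) Fq :=
      MvPolynomial.X 1 ^ 2 - MvPolynomial.C a * MvPolynomial.X 0 * MvPolynomial.X 1
        + MvPolynomial.C b * MvPolynomial.X 0 ^ 2 - MvPolynomial.X 0
    RingHom.ker (Φ : MvPolynomial (Fin 2) Fq →+* RatFunc Fq) = Ideal.span {ρ} ∧
      Set.range Φ = {u : RatFunc Fq | ∃ (P : Polynomial Fq) (d : ℕ), P.natDegree ≤ 2 * d ∧
        u = algebraMap (Polynomial Fq) (RatFunc Fq) P /
          algebraMap (Polynomial Fq) (RatFunc Fq) π ^ d} ∧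
      Nonempty ((MvPolynomial (Fin 2) Fq ⧸ Ideal.span {ρ}) ≃ₐ[Fq]
        Algebra.adjoin Fq ({x, y} : Set (RatFunc Fq))) :=
  stmt0_general a b
end

section
/- In the subring 𝒜 = 𝔽_q[x, y] of 𝔽_q(t) (where x = 1/π and y = t/π), let I_∞ be the ideal generated by x and y, and let I_0 be the ideal generated by x − ζ^{−(q+1)} and y (note ζ^{q+1} ∈ 𝔽_q^×, so ζ^{−(q+1)} ∈ 𝔽_q). Then I_∞² = (x) and I_0 · I_∞ = (y) as ideals of 𝒜. -/
/-!
Since `t² - a t + b = π`, the generators `x = 1/π` and `y = t/π` of `𝒜` satisfy the conic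
relation `y² - a x y + b x² = x`. Both ideal identities follow formally from this relation
and from `b` being a unit: the relation puts `y²` in `(x)` and `(x - b⁻¹) x` in `(y)`, and
conversely writes `x` as a combination of `x², x y, y²`, while `y = b (y x - (x - b⁻¹) y)`.
-/

namespace Ideal

variable {A : Type*} [CommRing A] {a b c x y : A}

theorem span_pair_sq_eq_span_singleton (h : y ^ 2 - a * x * y + b * x ^ 2 = x) :
    span {x, y} ^ 2 = span {x} := by
  rw [sq, span_pair_mul_span_pair]
  apply le_antisymm
  · have hyy : x ∣ y * y := ⟨1 + a * y - b * x, by linear_combination h⟩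
    simp only [span_le, Set.insert_subset_iff, Set.singleton_subset_iff, SetLike.mem_coe,
      mem_span_singleton]
    exact ⟨dvd_mul_right x x, dvd_mul_right x y, dvd_mul_left x y, hyy⟩
  · have hx : y * y - a * (x * y) + b * (x * x) ∈ span {x * x, x * y, y * x, y * y} :=
      add_mem (sub_mem (subset_span (by simp)) (mul_mem_left _ _ (subset_span (by simp))))
        (mul_mem_left _ _ (subset_span (by simp)))
    rw [span_singleton_le_iff_mem]
    convert hx using 1
    linear_combination -h

theorem span_pair_sub_mul_span_pair (h : y ^ 2 - a * x * y + b * x ^ 2 = x) (hbc : b * c = 1) :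
    span {x - c, y} * span {x, y} = span {y} := by
  rw [span_pair_mul_span_pair]
  apply le_antisymm
  · have hxx : y ∣ (x - c) * x := ⟨c * (a * x - y), by linear_combination c * h - x ^ 2 * hbc⟩
    simp only [span_le, Set.insert_subset_iff, Set.singleton_subset_iff, SetLike.mem_coe,
      mem_span_singleton]
    exact ⟨hxx, dvd_mul_left y _, dvd_mul_right y x, dvd_mul_right y y⟩
  · have hy : b * (y * x) - b * ((x - c) * y) ∈ span {(x - c) * x, (x - c) * y, y * x, y * y} :=
      sub_mem (mul_mem_left _ _ (subset_span (by simp))) (mul_mem_left _ _ (subset_span (by simp)))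
    rw [span_singleton_le_iff_mem]
    convert hy using 1
    linear_combination -y * hbc

end Ideal

theorem inv_conic_relation {F : Type*} [Field F] (a b t : F) :
    (t * (t ^ 2 - a * t + b)⁻¹) ^ 2 - a * (t ^ 2 - a * t + b)⁻¹ * (t * (t ^ 2 - a * t + b)⁻¹)
      + b * ((t ^ 2 - a * t + b)⁻¹) ^ 2 = (t ^ 2 - a * t + b)⁻¹ := by
  rcases eq_or_ne (t ^ 2 - a * t + b) 0 with hπ | hπ
  · simp [hπ]
  · field_simp

set_option synthInstance.maxHeartbeats 1000000 in
theorem stmt1_general {Fq E : Type*} [Field Fq] [Fintype Fq] [Field E] [Algebra Fq E]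
    (q : ℕ) (hq : Fintype.card Fq = q)
    (ζ : E) (hζ : ζ ^ q ≠ ζ)
    (a b : Fq) (hb : algebraMap Fq E b = ζ ^ (q + 1)) :
    let x : RatFunc Fq := (RatFunc.X ^ 2 - RatFunc.C a * RatFunc.X + RatFunc.C b)⁻¹
    let y : RatFunc Fq := RatFunc.X * x
    let A : Subalgebra Fq (RatFunc Fq) := Algebra.adjoin Fq {x, y}
    let xA : A := ⟨x, Algebra.subset_adjoin (Set.mem_insert _ _)⟩
    let yA : A := ⟨y, Algebra.subset_adjoin (Set.mem_insert_of_mem _ rfl)⟩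
    let cA : A := algebraMap Fq A b⁻¹
    Ideal.span {xA, yA} ^ 2 = Ideal.span {xA} ∧
      Ideal.span {xA - cA, yA} * Ideal.span {xA, yA} = Ideal.span {yA} := by
  intro x y A xA yA cA
  have hζ0 : ζ ≠ 0 := by
    rintro rfl
    exact hζ (zero_pow (hq ▸ Fintype.card_ne_zero))
  have hb0 : b ≠ 0 := by
    rintro rfl
    exact pow_ne_zero _ hζ0 (by rw [← hb, map_zero])
  have hrel : yA ^ 2 - algebraMap Fq A a * xA * yA + algebraMap Fq A b * xA ^ 2 = xA :=
    Subtype.ext (inv_conic_relation (RatFunc.C a) (RatFunc.C b) RatFunc.X)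
  have hbc : algebraMap Fq A b * cA = 1 := by
    rw [← map_mul, mul_inv_cancel₀ hb0, map_one]
  exact ⟨Ideal.span_pair_sq_eq_span_singleton hrel, Ideal.span_pair_sub_mul_span_pair hrel hbc⟩

set_option synthInstance.maxHeartbeats 1000000 in
/-- In `𝒜 = 𝔽_q[x,y] ⊆ 𝔽_q(t)` (with `x = 1/π`, `y = t/π`) one has
`I_∞² = (x)` and `I_0 · I_∞ = (y)`. -/
theorem stmt1 {Fq E : Type*} [Field Fq] [Fintype Fq] [Field E] [Algebra Fq E]
    (q : ℕ) (hq : Fintype.card Fq = q)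
    (ζ : E) (hζ : ζ ^ q ≠ ζ) (hζ2 : ζ ^ q ^ 2 = ζ)
    (a b : Fq) (ha : algebraMap Fq E a = ζ + ζ ^ q) (hb : algebraMap Fq E b = ζ ^ (q + 1)) :
    let x : RatFunc Fq := (RatFunc.X ^ 2 - RatFunc.C a * RatFunc.X + RatFunc.C b)⁻¹
    let y : RatFunc Fq := RatFunc.X * x
    let A : Subalgebra Fq (RatFunc Fq) := Algebra.adjoin Fq {x, y}
    let xA : A := ⟨x, Algebra.subset_adjoin (Set.mem_insert _ _)⟩
    let yA : A := ⟨y, Algebra.subset_adjoin (Set.mem_insert_of_mem _ rfl)⟩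
    let cA : A := algebraMap Fq A b⁻¹
    Ideal.span {xA, yA} ^ 2 = Ideal.span {xA} ∧
      Ideal.span {xA - cA, yA} * Ideal.span {xA, yA} = Ideal.span {yA} :=
  stmt1_general q hq ζ hζ a b hb
end

section
/- Define L_0 = 1 and, for j ≥ 1, L_j = L_{j−1}·(t − t^{q^j})/((t − ζ^{q^{j+1}})·(t − ζ)^{q^j − q^{j−1}}·(t − ζ^q)^{q^{j−1}}) in 𝔽_{q²}(t). Then for every j ≥ 0, L_j = [1]·[2]·[3]⋯[j] · ((t − ζ^q)/(t − ζ))^{q^j − 1}, i.e. L_j = [1][2]⋯[j]·T^{(σ−1)(q^j−1)}. -/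
/-!
Writing `A = t - ζ^q`, `B = t - ζ` and `Q = q^(j+1)`, the `q`-power Frobenius gives
`A^Q = t^Q - ζ^(q^(j+2))`, so `[j+1] = A⁻¹^Q - (t - ζ^(q^(j+2)))⁻¹ = (t - t^Q) / ((t - ζ^(q^(j+2))) A^Q)`,
where `ζ^(q^(j+2))` alternates between `ζ^q` and `ζ` because `x^(q^2) = x` on `𝔽_{q²}`.
Hence `L_{j+1} / L_j = [j+1] · (A/B)^(q^(j+1) - q^j)`, and the closed form follows by induction on `j`.
-/

open RatFunc

theorem FiniteField.exists_eq_ringChar_pow_of_dvd_card {F : Type*} [Field F] [Fintype F] {q : ℕ}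
    (hq : q ∣ Fintype.card F) : ∃ e, q = ringChar F ^ e := by
  obtain ⟨n, hp, hcard⟩ := FiniteField.card F (ringChar F)
  obtain ⟨e, -, he⟩ := (Nat.dvd_prime_pow hp).1 (hcard ▸ hq)
  exact ⟨e, he⟩

theorem FiniteField.pow_pow_add_two {F : Type*} [Field F] [Fintype F] {q : ℕ}
    (hq : Fintype.card F = q ^ 2) (x : F) (k : ℕ) : x ^ q ^ (k + 2) = x ^ q ^ k := by
  rw [pow_add, mul_comm, pow_mul, ← hq, FiniteField.pow_card]

theorem FiniteField.pow_pow_succ_eq_ite {F : Type*} [Field F] [Fintype F] {q : ℕ}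
    (hq : Fintype.card F = q ^ 2) (x : F) (k : ℕ) :
    x ^ q ^ (k + 1) = if k % 2 = 0 then x ^ q else x := by
  induction k using Nat.twoStepInduction with
  | zero => simp
  | one => simpa using FiniteField.pow_pow_add_two hq x 0
  | more k ih _ => rw [FiniteField.pow_pow_add_two hq, ih, Nat.add_mod_right]

theorem div_mul_pow_sub_mul_pow {K : Type*} [Field K] {a : K} (ha : a ≠ 0) (b c d : K) {m n : ℕ}
    (hmn : m ≤ n) : c / (d * b ^ (n - m) * a ^ m) = c / (d * a ^ n) * (a / b) ^ (n - m) := by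
  obtain ⟨k, rfl⟩ := Nat.exists_eq_add_of_le hmn
  rw [Nat.add_sub_cancel_left, pow_add, div_pow]
  field_simp

namespace RatFunc

variable {F : Type*} [Field F]

theorem X_sub_C_ne_zero (a : F) : (X - C a : RatFunc F) ≠ 0 := by
  simpa using RatFunc.algebraMap_ne_zero (Polynomial.X_sub_C_ne_zero a)

theorem X_sub_C_pow_pow [Fintype F] {q : ℕ} (hq : q ∣ Fintype.card F) (a : F) (k : ℕ) :
    (X - C a : RatFunc F) ^ q ^ k = X ^ q ^ k - C (a ^ q ^ k) := by
  obtain ⟨e, rfl⟩ := FiniteField.exists_eq_ringChar_pow_of_dvd_card hq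
  have := Fact.mk (CharP.char_is_prime F (ringChar F))
  rw [← pow_mul, sub_pow_char_pow, map_pow]

theorem inv_X_sub_C_pow_pow_sub_inv [Fintype F] {q : ℕ} (hq : q ∣ Fintype.card F) (a : F)
    (k : ℕ) : (X - C a : RatFunc F)⁻¹ ^ q ^ k - (X - C (a ^ q ^ k))⁻¹ =
      (X - X ^ q ^ k) / ((X - C (a ^ q ^ k)) * (X - C a) ^ q ^ k) := by
  rw [inv_pow, inv_sub_inv (pow_ne_zero _ (X_sub_C_ne_zero a)) (X_sub_C_ne_zero _), mul_comm,
    X_sub_C_pow_pow hq]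
  ring

end RatFunc

theorem stmt7_general {F : Type*} [Field F] [Fintype F]
    (q : ℕ) (hq : Fintype.card F = q ^ 2) (ζ : F)
    (Lf : ℕ → RatFunc F) (hL0 : Lf 0 = 1)
    (hL : ∀ j : ℕ, Lf (j + 1) = Lf j * (RatFunc.X - RatFunc.X ^ q ^ (j + 1)) /
      ((RatFunc.X - RatFunc.C (ζ ^ q ^ (j + 2))) *
        (RatFunc.X - RatFunc.C ζ) ^ (q ^ (j + 1) - q ^ j) *
        (RatFunc.X - RatFunc.C ζ ^ q) ^ q ^ j)) :
    let T : RatFunc F := (RatFunc.X - RatFunc.C ζ ^ q)⁻¹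
    let Tσ : RatFunc F := (RatFunc.X - RatFunc.C ζ)⁻¹
    let br : ℕ → RatFunc F := fun k => T ^ q ^ k - if k % 2 = 0 then T else Tσ
    ∀ j : ℕ, Lf j = (∏ i ∈ Finset.range j, br (i + 1)) *
      ((RatFunc.X - RatFunc.C ζ ^ q) / (RatFunc.X - RatFunc.C ζ)) ^ (q ^ j - 1) := by
  intro T Tσ br j
  have hq0 : 0 < q := Nat.pos_of_ne_zero fun h => by
    simpa [hq, h] using Fintype.card_pos (α := F)
  induction j with
  | zero => simpa using hL0
  | succ j ih =>
    have hbr : br (j + 1) = (X - X ^ q ^ (j + 1)) /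
        ((X - C (ζ ^ q ^ (j + 2))) * (X - C ζ ^ q) ^ q ^ (j + 1)) := by
      have hζpow : ζ ^ q ^ (j + 2) = (ζ ^ q) ^ q ^ (j + 1) := by rw [← pow_mul, ← pow_succ']
      have hsnd : (if (j + 1) % 2 = 0 then T else Tσ) = (X - C (ζ ^ q ^ (j + 2)))⁻¹ := by
        rw [FiniteField.pow_pow_succ_eq_ite hq ζ (j + 1)]
        split_ifs <;> simp [T, Tσ]
      simp only [br]
      rw [hsnd, hζpow]
      simp only [T, ← map_pow]
      exact inv_X_sub_C_pow_pow_sub_inv (hq ▸ dvd_pow_self q two_ne_zero) _ _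
    have h1 : 1 ≤ q ^ j := Nat.one_le_pow _ _ hq0
    have hle : q ^ j ≤ q ^ (j + 1) := Nat.pow_le_pow_right hq0 j.le_succ
    rw [hL j, ih, Finset.prod_range_succ, mul_div_assoc, ← map_pow,
      div_mul_pow_sub_mul_pow (X_sub_C_ne_zero _) _ _ _ hle, map_pow, ← hbr,
      show q ^ (j + 1) - 1 = (q ^ j - 1) + (q ^ (j + 1) - q ^ j) by omega, pow_add]
    ring

/-- Lemma 3.4: closed formula `L_j = [1][2]⋯[j] · T^{(σ−1)(q^j−1)}` for the
binomial coefficients `L_j`. -/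
theorem stmt7 {F : Type*} [Field F] [Fintype F]
    (q : ℕ) (hq : Fintype.card F = q ^ 2) (ζ : F) (hζ : ζ ^ q ≠ ζ)
    (Lf : ℕ → RatFunc F) (hL0 : Lf 0 = 1)
    (hL : ∀ j : ℕ, Lf (j + 1) = Lf j * (RatFunc.X - RatFunc.X ^ q ^ (j + 1)) /
      ((RatFunc.X - RatFunc.C (ζ ^ q ^ (j + 2))) *
        (RatFunc.X - RatFunc.C ζ) ^ (q ^ (j + 1) - q ^ j) *
        (RatFunc.X - RatFunc.C ζ ^ q) ^ q ^ j)) :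
    let T : RatFunc F := (RatFunc.X - RatFunc.C ζ ^ q)⁻¹
    let Tσ : RatFunc F := (RatFunc.X - RatFunc.C ζ)⁻¹
    let br : ℕ → RatFunc F := fun k => T ^ q ^ k - if k % 2 = 0 then T else Tσ
    ∀ j : ℕ, Lf j = (∏ i ∈ Finset.range j, br (i + 1)) *
      ((RatFunc.X - RatFunc.C ζ ^ q) / (RatFunc.X - RatFunc.C ζ)) ^ (q ^ j - 1) :=
  stmt7_general q hq ζ Lf hL0 hL
end

section
/- For d ≥ 1 define α_d = ∏_{j=2}^{d} (1 − [2(j−1)]/[2j]) and β_d = ∏_{j=1}^{d} (1 − [2j−1]/[2j+1]) in 𝔽_{q²}(t) (empty products equal 1). Then: (i) α_d = [2]^{(q^{2d}−1)/(q²−1)} / ∏_{j=1}^{d} [2j]; (ii) β_d = [1]·[2]^{(q^{2d+1}−q)/(q²−1)} / ∏_{j=0}^{d} [2j+1]; and (iii) for every k ≥ 1 the valuation of [k] at the place t − ζ^q of 𝔽_{q²}(t) (i.e. the order of vanishing at t = ζ^q) equals −q^k. -/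
/-!
Since `x ↦ x ^ q` is additive in characteristic `p`, the brackets satisfy
`[k + 2] - [k] = [2] ^ q ^ k`. So every factor `1 - [k] / [k + 2]` equals `[2] ^ q ^ k / [k + 2]`,
and the partial products collapse to a power of `[2]` whose exponent is a geometric sum.
For the valuation, with `u = t - ζ ^ q`, the bracket `[k]` is `u ^ (-q ^ k) - u ^ (-1)` or
`u ^ (-q ^ k) - (t - ζ) ^ (-1)`, a rational function with a pole of order exactly `q ^ k`
at `ζ ^ q`.
-/


open Finset
open scoped Polynomial

namespace RatFunc

variable {K : Type*} [Field K]

noncomputable def orderAt (c : K) (f : RatFunc K) : ℤ :=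
  (f.num.rootMultiplicity c : ℤ) - f.denom.rootMultiplicity c

@[simp]
lemma orderAt_zero (c : K) : orderAt c 0 = 0 := by
  simp [orderAt]

lemma orderAt_algebraMap_div {c : K} {p r : Polynomial K} (hp : p ≠ 0) (hr : r ≠ 0) :
    orderAt c (algebraMap _ _ p / algebraMap _ _ r) =
      (p.rootMultiplicity c : ℤ) - r.rootMultiplicity c := by
  set f := algebraMap _ (RatFunc K) p / algebraMap _ _ r
  have hf : f.num ≠ 0 :=
    num_ne_zero (div_ne_zero (algebraMap_ne_zero hp) (algebraMap_ne_zero hr))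
  have hcross : f.num * r = p * f.denom := (num_mul_eq_mul_denom_iff hr).2 rfl
  have hmult := congrArg (Polynomial.rootMultiplicity c) hcross
  rw [Polynomial.rootMultiplicity_mul (mul_ne_zero hf hr),
    Polynomial.rootMultiplicity_mul (mul_ne_zero hp f.denom_ne_zero)] at hmult
  simp only [orderAt]
  omega

lemma X_sub_C_eq_algebraMap (c : K) :
    X - C c = algebraMap K[X] (RatFunc K) (Polynomial.X - Polynomial.C c) := by
  rw [map_sub, algebraMap_X, algebraMap_C]

lemma orderAt_inv_X_sub_C_pow_sub_inv_self (c : K) {N : ℕ} (hN : 2 ≤ N) :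
    orderAt c ((X - C c)⁻¹ ^ N - (X - C c)⁻¹) = -N := by
  obtain ⟨M, rfl⟩ : ∃ M, N = M + 2 := ⟨N - 2, by omega⟩
  have hu := Polynomial.X_sub_C_ne_zero c
  have hrepr : (X - C c)⁻¹ ^ (M + 2) - (X - C c)⁻¹ =
      algebraMap _ (RatFunc K) (1 - (Polynomial.X - Polynomial.C c) ^ (M + 1)) /
        algebraMap _ _ ((Polynomial.X - Polynomial.C c) ^ (M + 2)) := by
    have hU := algebraMap_ne_zero (K := K) hu
    rw [map_sub, map_one, map_pow, map_pow, X_sub_C_eq_algebraMap, inv_pow]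
    field_simp
    ring
  have hnum : 1 - (Polynomial.X - Polynomial.C c) ^ (M + 1) ≠ 0 := fun h => by
    simpa using congrArg (Polynomial.eval c) h
  rw [hrepr, orderAt_algebraMap_div hnum (pow_ne_zero _ hu),
    Polynomial.rootMultiplicity_X_sub_C_pow, Polynomial.rootMultiplicity_eq_zero (by simp)]
  push_cast
  ring

lemma orderAt_inv_X_sub_C_pow_sub_inv {b c : K} (hbc : b ≠ c) {N : ℕ} (hN : 1 ≤ N) :
    orderAt c ((X - C c)⁻¹ ^ N - (X - C b)⁻¹) = -N := by
  have hu := Polynomial.X_sub_C_ne_zero c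
  have hv := Polynomial.X_sub_C_ne_zero b
  have hrepr : (X - C c)⁻¹ ^ N - (X - C b)⁻¹ =
      algebraMap _ (RatFunc K)
          ((Polynomial.X - Polynomial.C b) - (Polynomial.X - Polynomial.C c) ^ N) /
        algebraMap _ _ ((Polynomial.X - Polynomial.C c) ^ N * (Polynomial.X - Polynomial.C b)) := by
    have hU := algebraMap_ne_zero (K := K) hu
    have hV := algebraMap_ne_zero (K := K) hv
    rw [map_sub, map_mul, map_pow, X_sub_C_eq_algebraMap, X_sub_C_eq_algebraMap, inv_pow]
    field_simp
  have hvc : (Polynomial.X - Polynomial.C b).eval c ≠ 0 := by simpa [sub_eq_zero] using hbc.symm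
  have hnum :
      ¬ ((Polynomial.X - Polynomial.C b) - (Polynomial.X - Polynomial.C c) ^ N).IsRoot c := by
    simpa [zero_pow (by omega : N ≠ 0), sub_eq_zero] using hbc.symm
  have hden := mul_ne_zero (pow_ne_zero N hu) hv
  rw [hrepr, orderAt_algebraMap_div (fun h => hnum (by simp [h])) hden,
    Polynomial.rootMultiplicity_mul hden,
    Polynomial.rootMultiplicity_X_sub_C_pow, Polynomial.rootMultiplicity_eq_zero hnum,
    Polynomial.rootMultiplicity_eq_zero hvc]
  simp

end RatFunc

section Bracket

variable {R : Type*} [CommRing R]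

-- `bracket q T Tσ k` is the paper's `[k]`, and `alphaProd`, `betaProd` below are `α_d`, `β_d`.
def bracket (q : ℕ) (T Tσ : R) (k : ℕ) : R :=
  T ^ q ^ k - if k % 2 = 0 then T else Tσ

@[simp]
lemma bracket_zero (q : ℕ) (T Tσ : R) : bracket q T Tσ 0 = 0 := by
  simp [bracket]

lemma bracket_add_two_sub_bracket {p : ℕ} [ExpChar R p] (e : ℕ) (T Tσ : R) (k : ℕ) :
    bracket (p ^ e) T Tσ (k + 2) - bracket (p ^ e) T Tσ k =
      bracket (p ^ e) T Tσ 2 ^ (p ^ e) ^ k := by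
  have hpow : (p ^ e) ^ k = p ^ (e * k) := (pow_mul p e k).symm
  have hfrob : (T ^ (p ^ e) ^ 2 - T) ^ (p ^ e) ^ k = T ^ (p ^ e) ^ (k + 2) - T ^ (p ^ e) ^ k := by
    rw [hpow, sub_pow_expChar_pow, ← hpow, ← pow_mul, ← pow_add, add_comm 2 k]
  simp only [bracket, Nat.add_mod_right, Nat.mod_self, if_true, hfrob]
  ring

end Bracket

section PartialProducts

variable {K : Type*} [Field K]

def alphaProd (q : ℕ) (T Tσ : K) (d : ℕ) : K :=
  ∏ j ∈ Icc 2 d, (1 - bracket q T Tσ (2 * (j - 1)) / bracket q T Tσ (2 * j))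

def betaProd (q : ℕ) (T Tσ : K) (d : ℕ) : K :=
  ∏ j ∈ Icc 1 d, (1 - bracket q T Tσ (2 * j - 1) / bracket q T Tσ (2 * j + 1))

lemma prod_Icc_one_eq_prod_range {M : Type*} [CommMonoid M] (f : ℕ → M) (n : ℕ) :
    ∏ j ∈ Icc 1 n, f j = ∏ i ∈ range n, f (i + 1) := by
  rw [← Ico_add_one_right_eq_Icc, ← zero_add 1, ← prod_Ico_add', range_eq_Ico]

variable {p : ℕ} [ExpChar K p] (e : ℕ) (T Tσ : K)

lemma prod_range_one_sub_bracket_div (s d : ℕ)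
    (hne : ∀ i < d, bracket (p ^ e) T Tσ (2 * i + s + 2) ≠ 0) :
    ∏ i ∈ range d,
        (1 - bracket (p ^ e) T Tσ (2 * i + s) / bracket (p ^ e) T Tσ (2 * i + s + 2)) =
      bracket (p ^ e) T Tσ 2 ^ (∑ i ∈ range d, (p ^ e) ^ (2 * i + s)) /
        ∏ i ∈ range d, bracket (p ^ e) T Tσ (2 * i + s + 2) := by
  rw [← prod_pow_eq_pow_sum, ← prod_div_distrib]
  refine prod_congr rfl fun i hi => ?_
  rw [one_sub_div (hne i (mem_range.1 hi)), bracket_add_two_sub_bracket]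

lemma alphaProd_eq (d : ℕ) (hne : ∀ j ∈ Icc 1 d, bracket (p ^ e) T Tσ (2 * j) ≠ 0) :
    alphaProd (p ^ e) T Tσ d =
      bracket (p ^ e) T Tσ 2 ^ (∑ i ∈ range d, (p ^ e) ^ (2 * i)) /
        ∏ j ∈ Icc 1 d, bracket (p ^ e) T Tσ (2 * j) := by
  have hIcc : alphaProd (p ^ e) T Tσ d = ∏ j ∈ Icc 1 d,
      (1 - bracket (p ^ e) T Tσ (2 * (j - 1)) / bracket (p ^ e) T Tσ (2 * j)) := by
    refine prod_subset (Icc_subset_Icc_left one_le_two) fun j hj hj' => ?_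
    -- the extra factor `j = 1` is `1 - [0] / [2] = 1`
    obtain rfl : j = 1 := by simp only [mem_Icc] at hj hj'; omega
    simp
  rw [hIcc, prod_Icc_one_eq_prod_range, prod_Icc_one_eq_prod_range]
  simpa only [add_zero, Nat.add_sub_cancel, mul_add, mul_one] using
    prod_range_one_sub_bracket_div e T Tσ 0 d fun i hi =>
      hne (i + 1) (by simp only [mem_Icc]; omega)

lemma betaProd_eq (d : ℕ) (hne : ∀ j ∈ Icc 0 d, bracket (p ^ e) T Tσ (2 * j + 1) ≠ 0) :
    betaProd (p ^ e) T Tσ d =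
      bracket (p ^ e) T Tσ 1 *
          bracket (p ^ e) T Tσ 2 ^ (∑ i ∈ range d, (p ^ e) ^ (2 * i + 1)) /
        ∏ j ∈ Icc 0 d, bracket (p ^ e) T Tσ (2 * j + 1) := by
  have h1 : bracket (p ^ e) T Tσ 1 ≠ 0 := hne 0 (by simp)
  rw [betaProd, prod_Icc_one_eq_prod_range, ← Nat.range_succ_eq_Icc_zero, prod_range_succ',
    mul_comm _ (bracket _ _ _ _), mul_div_mul_left _ _ h1]
  simp only [show ∀ i, 2 * (i + 1) - 1 = 2 * i + 1 from fun i => by omega,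
    show ∀ i, 2 * (i + 1) + 1 = 2 * i + 1 + 2 from fun i => by omega]
  exact prod_range_one_sub_bracket_div e T Tσ 1 d fun i hi =>
    hne (i + 1) (by simp only [mem_Icc]; omega)

end PartialProducts

namespace RatFunc

variable {K : Type*} [Field K]

lemma orderAt_bracket {b c : K} (hbc : b ≠ c) {q : ℕ} (hq : 2 ≤ q) {k : ℕ} (hk : 1 ≤ k) :
    orderAt c (bracket q (X - C c)⁻¹ (X - C b)⁻¹ k) = -(q ^ k : ℤ) := by
  have hqk : 2 ≤ q ^ k := hq.trans (Nat.le_self_pow (by omega) q)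
  unfold bracket
  split_ifs
  · exact_mod_cast orderAt_inv_X_sub_C_pow_sub_inv_self c hqk
  · exact_mod_cast orderAt_inv_X_sub_C_pow_sub_inv hbc (by omega)

lemma bracket_ne_zero {b c : K} (hbc : b ≠ c) {q : ℕ} (hq : 2 ≤ q) {k : ℕ} (hk : 1 ≤ k) :
    bracket q (X - C c)⁻¹ (X - C b)⁻¹ k ≠ 0 := fun h => by
  have h' := orderAt_bracket hbc hq hk
  rw [h, orderAt_zero] at h'
  have : (0 : ℤ) < (q : ℤ) ^ k := by positivity
  omega

end RatFunc

lemma Nat.sum_range_pow_two_mul {q : ℕ} (hq : 2 ≤ q) (d : ℕ) :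
    ∑ i ∈ range d, q ^ (2 * i) = (q ^ (2 * d) - 1) / (q ^ 2 - 1) := by
  simp only [pow_mul]
  exact Nat.geomSum_eq (hq.trans (Nat.le_self_pow two_ne_zero q)) d

lemma Nat.sum_range_pow_two_mul_add_one {q : ℕ} (hq : 2 ≤ q) (d : ℕ) :
    ∑ i ∈ range d, q ^ (2 * i + 1) = (q ^ (2 * d + 1) - q) / (q ^ 2 - 1) := by
  have hdvd : q ^ 2 - 1 ∣ q ^ (2 * d) - 1 := by
    simpa only [pow_mul, one_pow] using Nat.sub_dvd_pow_sub_pow (q ^ 2) 1 d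
  calc ∑ i ∈ range d, q ^ (2 * i + 1) = (∑ i ∈ range d, q ^ (2 * i)) * q := by
        simp only [pow_succ, sum_mul]
    _ = (q ^ (2 * d + 1) - q) / (q ^ 2 - 1) := by
        rw [Nat.sum_range_pow_two_mul hq, Nat.div_mul_right_comm hdvd, Nat.sub_mul, one_mul,
          ← pow_succ]

lemma FiniteField.exists_charP_eq_pow_of_card_eq_sq {F : Type*} [Field F] [Fintype F] {q : ℕ}
    (hq : Fintype.card F = q ^ 2) : ∃ p e, p.Prime ∧ CharP F p ∧ q = p ^ e := by
  obtain ⟨p, hchar, n, hp, hcard⟩ := FiniteField.card' F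
  obtain ⟨e, -, rfl⟩ := (Nat.dvd_prime_pow hp).1 (hcard ▸ hq ▸ dvd_pow_self q two_ne_zero)
  exact ⟨p, e, hp, hchar, rfl⟩

theorem stmt11_general {F : Type*} [Field F] [Fintype F]
    (q : ℕ) (hq : Fintype.card F = q ^ 2) (ζ : F) (hζ : ζ ^ q ≠ ζ) (d : ℕ) :
    let T : RatFunc F := (RatFunc.X - RatFunc.C ζ ^ q)⁻¹
    let Tσ : RatFunc F := (RatFunc.X - RatFunc.C ζ)⁻¹
    let br : ℕ → RatFunc F := fun k => T ^ q ^ k - if k % 2 = 0 then T else Tσ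
    let α : RatFunc F := ∏ j ∈ Finset.Icc 2 d, (1 - br (2 * (j - 1)) / br (2 * j))
    let β : RatFunc F := ∏ j ∈ Finset.Icc 1 d, (1 - br (2 * j - 1) / br (2 * j + 1))
    α = br 2 ^ ((q ^ (2 * d) - 1) / (q ^ 2 - 1)) / ∏ j ∈ Finset.Icc 1 d, br (2 * j) ∧
      β = br 1 * br 2 ^ ((q ^ (2 * d + 1) - q) / (q ^ 2 - 1)) /
        ∏ j ∈ Finset.Icc 0 d, br (2 * j + 1) ∧
      ∀ k : ℕ, 1 ≤ k →
        ((br k).num.rootMultiplicity (ζ ^ q) : ℤ) -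
          ((br k).denom.rootMultiplicity (ζ ^ q) : ℤ) = -(q ^ k : ℤ) := by
  intro T Tσ br α β
  have hq2 : 2 ≤ q := by
    have := Fintype.one_lt_card (α := F)
    by_contra!
    interval_cases q <;> simp_all
  obtain ⟨p, e, hp, hchar, rfl⟩ := FiniteField.exists_charP_eq_pow_of_card_eq_sq hq
  have : ExpChar F p := ExpChar.prime hp
  have hT : T = (RatFunc.X - RatFunc.C (ζ ^ p ^ e))⁻¹ := by simp only [T, map_pow]
  have hbr : br =
      bracket (p ^ e) (RatFunc.X - RatFunc.C (ζ ^ p ^ e))⁻¹ (RatFunc.X - RatFunc.C ζ)⁻¹ :=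
    hT ▸ rfl
  have hne : ∀ k, 1 ≤ k → br k ≠ 0 := fun k hk =>
    hbr ▸ RatFunc.bracket_ne_zero (Ne.symm hζ) hq2 hk
  refine ⟨?_, ?_, fun k hk => hbr ▸ RatFunc.orderAt_bracket (Ne.symm hζ) hq2 hk⟩
  · rw [← Nat.sum_range_pow_two_mul hq2]
    exact alphaProd_eq e T Tσ d fun j hj => hne _ (by simp only [mem_Icc] at hj; omega)
  · rw [← Nat.sum_range_pow_two_mul_add_one hq2]
    exact betaProd_eq e T Tσ d fun j _ => hne _ (by omega)

/-- Lemma 3.12: closed formulas for the partial products `α_d` and `β_d`, together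
with the valuation `v_{1/T}([k]) = −q^k` at the place `t − ζ^q`. -/
theorem stmt11 {F : Type*} [Field F] [Fintype F]
    (q : ℕ) (hq : Fintype.card F = q ^ 2) (ζ : F) (hζ : ζ ^ q ≠ ζ) (d : ℕ) (hd : 1 ≤ d) :
    let T : RatFunc F := (RatFunc.X - RatFunc.C ζ ^ q)⁻¹
    let Tσ : RatFunc F := (RatFunc.X - RatFunc.C ζ)⁻¹
    let br : ℕ → RatFunc F := fun k => T ^ q ^ k - if k % 2 = 0 then T else Tσ
    let α : RatFunc F := ∏ j ∈ Finset.Icc 2 d, (1 - br (2 * (j - 1)) / br (2 * j))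
    let β : RatFunc F := ∏ j ∈ Finset.Icc 1 d, (1 - br (2 * j - 1) / br (2 * j + 1))
    α = br 2 ^ ((q ^ (2 * d) - 1) / (q ^ 2 - 1)) / ∏ j ∈ Finset.Icc 1 d, br (2 * j) ∧
      β = br 1 * br 2 ^ ((q ^ (2 * d + 1) - q) / (q ^ 2 - 1)) /
        ∏ j ∈ Finset.Icc 0 d, br (2 * j + 1) ∧
      ∀ k : ℕ, 1 ≤ k →
        ((br k).num.rootMultiplicity (ζ ^ q) : ℤ) -
          ((br k).denom.rootMultiplicity (ζ ^ q) : ℤ) = -(q ^ k : ℤ) :=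
  stmt11_general q hq ζ hζ d
end

section
/- For every d ≥ 1 the following identity holds in 𝔽_{q²}(t): L_{2d+1}/L_{2d}^q = [1]^{1−q}·[2]·((t − ζ^q)/(t − ζ))^{q−1}·α_d^{q−1}·β_{d−1}^q·β_d^{−1}, where α_d = ∏_{j=2}^{d} (1 − [2(j−1)]/[2j]) and β_d = ∏_{j=1}^{d} (1 − [2j−1]/[2j+1]) (empty products equal 1, β_0 = 1). -/
/-!
Write `a = t - ζ^q`, `b = t - ζ`, so `T = a⁻¹`, `Tσ = b⁻¹`, and put `r = a / b`. Since `x ↦ x^q`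
is additive and `ζ^{q²} = ζ`, one has `a^{q^k} = t^{q^k} - ζ^{q^{k+1}}`, and the defining recursion
becomes `L_{j+1} = L_j · [j+1] · r^{q^{j+1}} / r^{q^j}`. Hence `L_j = r^{q^j - 1} ∏_{i ≤ j} [i]` and
`L_{2d+1} / L_{2d}^q = r^{q-1} · ∏_{i ≤ 2d+1} [i] / (∏_{i ≤ 2d} [i])^q`.

Additivity of Frobenius also gives `[k+2] - [k] = [2]^{q^k}`, so every factor of `α_d` and `β_d`
has the form `1 - [k]/[k+2] = [2]^{q^k} / [k+2]`. In `α_d^{q-1} β_{d-1}^q / β_d` the powers of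
`[2]` combine to `[2]^{-q}`, and both sides equal `∏_{i ≤ 2d} [i]^{1-q} · [2d+1]`; this is checked
by induction on `d`.
-/

open Finset

section

variable {K : Type*} [Field K] {q : ℕ}

theorem sub_pow_pow_of_sub_pow (hfrob : ∀ x y : K, (x - y) ^ q = x ^ q - y ^ q) (k : ℕ)
    (x y : K) : (x - y) ^ q ^ k = x ^ q ^ k - y ^ q ^ k := by
  induction k with
  | zero => simp
  | succ k ih => rw [pow_succ, pow_mul, pow_mul, pow_mul, ih, hfrob]

-- The bracket `[k]` of the paper.
def twistedBracket (q : ℕ) (T Tσ : K) (k : ℕ) : K := T ^ q ^ k - if k % 2 = 0 then T else Tσ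

theorem twistedBracket_add_two_sub (hfrob : ∀ x y : K, (x - y) ^ q = x ^ q - y ^ q)
    (T Tσ : K) (k : ℕ) :
    twistedBracket q T Tσ (k + 2) - twistedBracket q T Tσ k =
      twistedBracket q T Tσ 2 ^ q ^ k := by
  simp only [twistedBracket, Nat.add_mod_right, Nat.mod_self, if_true, sub_sub_sub_cancel_right]
  rw [sub_pow_pow_of_sub_pow hfrob, ← pow_mul, ← pow_add, add_comm]

-- With `x = [2]`, `k = 2d - 1`: the factor by which the right-hand side of
-- `prod_Icc_div_prod_Icc_pow_eq` grows from `d` to `d + 1`.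
theorem pow_div_mul_pow_div_mul_inv (hq : 1 ≤ q) {x y z w : K} (hx : x ≠ 0) (hy : y ≠ 0)
    (hz : z ≠ 0) (k : ℕ) :
    (x ^ q ^ (k + 1) / y) ^ (q - 1) * (x ^ q ^ k / z) ^ q * (x ^ q ^ (k + 2) / w)⁻¹ =
      y * w / (z * y) ^ q := by
  obtain ⟨m, rfl⟩ := Nat.exists_eq_add_of_le' hq
  have hpow : (x ^ (m + 1) ^ (k + 1)) ^ m * (x ^ (m + 1) ^ k) ^ (m + 1) =
      x ^ (m + 1) ^ (k + 2) := by
    rw [← pow_mul, ← pow_mul, ← pow_add]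
    ring_nf
  rw [Nat.add_sub_cancel, div_pow, div_pow, inv_div, ← hpow]
  field_simp
  ring

theorem prod_Icc_div_prod_Icc_pow_eq (hq : 1 ≤ q) (B : ℕ → K) (hB : ∀ k, B (k + 1) ≠ 0)
    (hdiff : ∀ k, B (k + 2) - B k = B 2 ^ q ^ k) (d : ℕ) (hd : 1 ≤ d) :
    (∏ i ∈ Icc 1 (2 * d + 1), B i) / (∏ i ∈ Icc 1 (2 * d), B i) ^ q =
      B 1 ^ ((1 : ℤ) - q) * B 2 *
        (∏ j ∈ Icc 2 d, (1 - B (2 * (j - 1)) / B (2 * j))) ^ (q - 1) *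
        (∏ j ∈ Icc 1 (d - 1), (1 - B (2 * j - 1) / B (2 * j + 1))) ^ q *
        (∏ j ∈ Icc 1 d, (1 - B (2 * j - 1) / B (2 * j + 1)))⁻¹ := by
  have hfactor : ∀ k, 1 - B k / B (k + 2) = B 2 ^ q ^ k / B (k + 2) := fun k => by
    rw [← hdiff, sub_div, div_self (hB (k + 1))]
  induction d, hd using Nat.le_induction with
  | base =>
    norm_num [prod_Icc_succ_top, hfactor 1, zpow_sub₀ (hB 0 : B 1 ≠ 0)]
    field_simp
    ring
  | succ d hd ih =>
    obtain ⟨k, hk⟩ : ∃ k, 2 * d = k + 1 := ⟨2 * d - 1, by omega⟩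
    have hP1 : ∏ i ∈ Icc 1 (2 * (d + 1) + 1), B i =
        (∏ i ∈ Icc 1 (2 * d + 1), B i) * (B (k + 3) * B (k + 4)) := by
      rw [show 2 * (d + 1) + 1 = 2 * d + 1 + 1 + 1 by ring, prod_Icc_succ_top (by omega),
        prod_Icc_succ_top (by omega), mul_assoc, show 2 * d + 1 + 1 = k + 3 by omega]
    have hP0 : ∏ i ∈ Icc 1 (2 * (d + 1)), B i =
        (∏ i ∈ Icc 1 (2 * d), B i) * (B (k + 2) * B (k + 3)) := by
      rw [show 2 * (d + 1) = 2 * d + 1 + 1 by ring, prod_Icc_succ_top (by omega),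
        prod_Icc_succ_top (by omega), mul_assoc, show 2 * d + 1 = k + 2 by omega]
    have hα : ∏ j ∈ Icc 2 (d + 1), (1 - B (2 * (j - 1)) / B (2 * j)) =
        (∏ j ∈ Icc 2 d, (1 - B (2 * (j - 1)) / B (2 * j))) * (1 - B (k + 1) / B (k + 3)) := by
      rw [prod_Icc_succ_top (by omega), show 2 * (d + 1 - 1) = k + 1 by omega,
        show 2 * (d + 1) = k + 3 by omega]
    have hβ : ∏ j ∈ Icc 1 (d + 1), (1 - B (2 * j - 1) / B (2 * j + 1)) =
        (∏ j ∈ Icc 1 d, (1 - B (2 * j - 1) / B (2 * j + 1))) * (1 - B (k + 2) / B (k + 4)) := by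
      rw [prod_Icc_succ_top (by omega), show 2 * (d + 1) - 1 = k + 2 by omega,
        show 2 * (d + 1) + 1 = k + 4 by omega]
    have hβm : ∏ j ∈ Icc 1 d, (1 - B (2 * j - 1) / B (2 * j + 1)) =
        (∏ j ∈ Icc 1 (d - 1), (1 - B (2 * j - 1) / B (2 * j + 1))) * (1 - B k / B (k + 2)) := by
      obtain ⟨n, rfl⟩ := Nat.exists_eq_add_of_le' hd
      rw [prod_Icc_succ_top (by omega), Nat.add_sub_cancel, show 2 * (n + 1) - 1 = k by omega,
        show 2 * (n + 1) + 1 = k + 2 by omega]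
    rw [hP1, hP0, hα, hβ, Nat.add_sub_cancel, mul_pow, ← div_mul_div_comm, ih, hβm,
      hfactor (k + 1), hfactor k, hfactor (k + 2), ← pow_div_mul_pow_div_mul_inv hq
      (hB 1 : B 2 ≠ 0) (hB (k + 2) : B (k + 3) ≠ 0) (hB (k + 1)) k]
    ring

theorem eq_pow_mul_prod_of_succ_eq (hq : 1 ≤ q) {r : K} (hr : r ≠ 0) {B L : ℕ → K}
    (hL0 : L 0 = 1) (hL : ∀ j, L (j + 1) = L j * B (j + 1) * r ^ q ^ (j + 1) / r ^ q ^ j)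
    (j : ℕ) : L j = r ^ (q ^ j - 1) * ∏ i ∈ Icc 1 j, B i := by
  induction j with
  | zero => simp [hL0]
  | succ j ih =>
    rw [hL, ih, prod_Icc_succ_top (by omega), pow_sub₀ r hr (Nat.one_le_pow _ _ hq),
      pow_sub₀ r hr (Nat.one_le_pow _ _ hq)]
    field_simp

theorem succ_div_pow_eq_of_succ_eq (hq : 1 ≤ q) {r : K} (hr : r ≠ 0) {B L : ℕ → K}
    (hL0 : L 0 = 1) (hL : ∀ j, L (j + 1) = L j * B (j + 1) * r ^ q ^ (j + 1) / r ^ q ^ j)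
    (j : ℕ) :
    L (j + 1) / L j ^ q =
      r ^ (q - 1) * ((∏ i ∈ Icc 1 (j + 1), B i) / (∏ i ∈ Icc 1 j, B i) ^ q) := by
  have hexp : q ^ (j + 1) - 1 = (q - 1) + (q ^ j - 1) * q := by
    have := Nat.one_le_pow j q hq
    zify [hq, this, Nat.one_le_pow (j + 1) q hq]
    ring
  rw [eq_pow_mul_prod_of_succ_eq hq hr hL0 hL, eq_pow_mul_prod_of_succ_eq hq hr hL0 hL, hexp,
    pow_add, pow_mul, mul_pow, mul_comm (r ^ (q - 1)), mul_assoc,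
    mul_div_mul_left _ _ (pow_ne_zero _ (pow_ne_zero _ hr)), mul_div_assoc]

section FrobeniusTwist

variable {t z : K}

theorem pow_pow_eq_pow_pow_mod_two (hz : z ^ q ^ 2 = z) (k : ℕ) :
    z ^ q ^ k = z ^ q ^ (k % 2) := by
  induction k using Nat.strong_induction_on with
  | _ k ih =>
    rcases lt_or_ge k 2 with hk | hk
    · rw [Nat.mod_eq_of_lt hk]
    · obtain ⟨m, rfl⟩ := Nat.exists_eq_add_of_le' hk
      rw [pow_add, mul_comm, pow_mul, hz, ih m (by omega), Nat.add_mod_right]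

theorem sub_pow_pow_ne_zero (hz : z ^ q ^ 2 = z) (ht : t ^ q ^ 2 ≠ t) (m : ℕ) :
    t - z ^ q ^ m ≠ 0 := by
  rw [sub_ne_zero]
  rintro rfl
  exact ht (by rw [← pow_mul, mul_comm, pow_mul, hz])

theorem twistedBracket_sub_pow_eq (hfrob : ∀ x y : K, (x - y) ^ q = x ^ q - y ^ q)
    (hz : z ^ q ^ 2 = z) (k : ℕ) :
    twistedBracket q (t - z ^ q)⁻¹ (t - z)⁻¹ k =
      (t ^ q ^ k - z ^ q ^ (k + 1))⁻¹ - (t - z ^ q ^ (k + 1))⁻¹ := by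
  rw [twistedBracket, inv_pow, sub_pow_pow_of_sub_pow hfrob, ← pow_mul, ← pow_succ',
    pow_pow_eq_pow_pow_mod_two hz (k + 1)]
  rcases Nat.mod_two_eq_zero_or_one k with hk | hk <;> simp [hk, Nat.add_mod]

theorem twistedBracket_sub_pow_ne_zero (hfrob : ∀ x y : K, (x - y) ^ q = x ^ q - y ^ q)
    (hz : z ^ q ^ 2 = z) (ht : ∀ k, t ^ q ^ (k + 1) ≠ t) (k : ℕ) :
    twistedBracket q (t - z ^ q)⁻¹ (t - z)⁻¹ (k + 1) ≠ 0 := by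
  rw [twistedBracket_sub_pow_eq hfrob hz, sub_ne_zero, Ne, inv_inj, sub_left_inj]
  exact ht k

theorem mul_div_eq_mul_twistedBracket_mul_div (hq : 1 ≤ q)
    (hfrob : ∀ x y : K, (x - y) ^ q = x ^ q - y ^ q)
    (hz : z ^ q ^ 2 = z) (ht : t ^ q ^ 2 ≠ t) (ℓ : K) (j : ℕ) :
    ℓ * (t - t ^ q ^ (j + 1)) /
        ((t - z ^ q ^ (j + 2)) * (t - z) ^ (q ^ (j + 1) - q ^ j) * (t - z ^ q) ^ q ^ j) =
      ℓ * twistedBracket q (t - z ^ q)⁻¹ (t - z)⁻¹ (j + 1) *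
        ((t - z ^ q) / (t - z)) ^ q ^ (j + 1) / ((t - z ^ q) / (t - z)) ^ q ^ j := by
  have ha : t - z ^ q ≠ 0 := by simpa using sub_pow_pow_ne_zero hz ht 1
  have hb : t - z ≠ 0 := by simpa using sub_pow_pow_ne_zero hz ht 0
  have hc := sub_pow_pow_ne_zero hz ht (j + 2)
  have hfrobj : (t - z ^ q) ^ q ^ (j + 1) = t ^ q ^ (j + 1) - z ^ q ^ (j + 2) := by
    rw [sub_pow_pow_of_sub_pow hfrob, ← pow_mul, ← pow_succ']
  rw [twistedBracket_sub_pow_eq hfrob hz, ← hfrobj, div_pow, div_pow,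
    ← pow_sub_mul_pow (t - z) (Nat.pow_le_pow_right hq (j.le_succ))]
  field_simp
  linear_combination ℓ * hfrobj

end FrobeniusTwist

end

theorem sub_pow_eq_sub_pow_of_card_eq_pow {F L : Type*} [Field F] [Fintype F] [Field L]
    [Algebra F L] {q n : ℕ} (hq : Fintype.card F = q ^ n) (hn : n ≠ 0) (x y : L) :
    (x - y) ^ q = x ^ q - y ^ q := by
  obtain ⟨p, _, k, hp, hcard⟩ := FiniteField.card' F
  have := Fact.mk hp
  have := charP_of_injective_algebraMap (algebraMap F L).injective p
  obtain ⟨m, -, rfl⟩ := (Nat.dvd_prime_pow hp).1 (hcard ▸ hq ▸ dvd_pow_self q hn)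
  exact sub_pow_char_pow x y m

theorem RatFunc.X_pow_ne_X {F : Type*} [Field F] {n : ℕ} (hn : n ≠ 1) :
    (RatFunc.X : RatFunc F) ^ n ≠ RatFunc.X := by
  intro h
  rw [← RatFunc.algebraMap_X, ← map_pow, (RatFunc.algebraMap_injective F).eq_iff] at h
  simpa [hn] using congrArg Polynomial.natDegree h

theorem stmt12_general {F : Type*} [Field F] [Fintype F]
    (q : ℕ) (hq : Fintype.card F = q ^ 2) (ζ : F) (d : ℕ) (hd : 1 ≤ d)
    (Lf : ℕ → RatFunc F) (hL0 : Lf 0 = 1)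
    (hL : ∀ j : ℕ, Lf (j + 1) = Lf j * (RatFunc.X - RatFunc.X ^ q ^ (j + 1)) /
      ((RatFunc.X - RatFunc.C (ζ ^ q ^ (j + 2))) *
        (RatFunc.X - RatFunc.C ζ) ^ (q ^ (j + 1) - q ^ j) *
        (RatFunc.X - RatFunc.C ζ ^ q) ^ q ^ j)) :
    let T : RatFunc F := (RatFunc.X - RatFunc.C ζ ^ q)⁻¹
    let Tσ : RatFunc F := (RatFunc.X - RatFunc.C ζ)⁻¹
    let br : ℕ → RatFunc F := fun k => T ^ q ^ k - if k % 2 = 0 then T else Tσ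
    let α : RatFunc F := ∏ j ∈ Finset.Icc 2 d, (1 - br (2 * (j - 1)) / br (2 * j))
    let βd : RatFunc F := ∏ j ∈ Finset.Icc 1 d, (1 - br (2 * j - 1) / br (2 * j + 1))
    let βdm : RatFunc F := ∏ j ∈ Finset.Icc 1 (d - 1), (1 - br (2 * j - 1) / br (2 * j + 1))
    Lf (2 * d + 1) / Lf (2 * d) ^ q =
      br 1 ^ ((1 : ℤ) - (q : ℤ)) * br 2 *
        ((RatFunc.X - RatFunc.C ζ ^ q) / (RatFunc.X - RatFunc.C ζ)) ^ (q - 1) *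
        α ^ (q - 1) * βdm ^ q * βd⁻¹ := by
  intro T Tσ br α βd βdm
  have hq1 : 1 < q := (one_lt_pow_iff two_ne_zero).1 (hq ▸ Fintype.one_lt_card)
  have hfrob := sub_pow_eq_sub_pow_of_card_eq_pow (L := RatFunc F) hq two_ne_zero
  have hz : RatFunc.C ζ ^ q ^ 2 = RatFunc.C ζ := by rw [← map_pow, ← hq, FiniteField.pow_card]
  have ht : ∀ k, (RatFunc.X : RatFunc F) ^ q ^ (k + 1) ≠ RatFunc.X := fun k =>
    RatFunc.X_pow_ne_X (Nat.one_lt_pow k.succ_ne_zero hq1).ne'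
  have hr : (RatFunc.X - RatFunc.C ζ ^ q) / (RatFunc.X - RatFunc.C ζ) ≠ 0 := by
    simpa using div_ne_zero (sub_pow_pow_ne_zero hz (ht 1) 1) (sub_pow_pow_ne_zero hz (ht 1) 0)
  have hrec : ∀ j, Lf (j + 1) = Lf j * br (j + 1) *
      ((RatFunc.X - RatFunc.C ζ ^ q) / (RatFunc.X - RatFunc.C ζ)) ^ q ^ (j + 1) /
        ((RatFunc.X - RatFunc.C ζ ^ q) / (RatFunc.X - RatFunc.C ζ)) ^ q ^ j := fun j => by
    rw [hL, map_pow]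
    exact mul_div_eq_mul_twistedBracket_mul_div hq1.le hfrob hz (ht 1) _ j
  rw [succ_div_pow_eq_of_succ_eq hq1.le hr hL0 hrec, prod_Icc_div_prod_Icc_pow_eq hq1.le br
    (twistedBracket_sub_pow_ne_zero hfrob hz ht) (twistedBracket_add_two_sub hfrob T Tσ) d hd]
  ring

/-- The key identity `L_{2d+1}/L_{2d}^q = [1]^{1−q}·[2]·T^{(q−1)(σ−1)}·α_d^{q−1}·β_{d−1}^q·β_d⁻¹`
used in the computation of the Carlitz period `ξ_𝒜` (Theorem 3.13). -/
theorem stmt12 {F : Type*} [Field F] [Fintype F]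
    (q : ℕ) (hq : Fintype.card F = q ^ 2) (ζ : F) (hζ : ζ ^ q ≠ ζ) (d : ℕ) (hd : 1 ≤ d)
    (Lf : ℕ → RatFunc F) (hL0 : Lf 0 = 1)
    (hL : ∀ j : ℕ, Lf (j + 1) = Lf j * (RatFunc.X - RatFunc.X ^ q ^ (j + 1)) /
      ((RatFunc.X - RatFunc.C (ζ ^ q ^ (j + 2))) *
        (RatFunc.X - RatFunc.C ζ) ^ (q ^ (j + 1) - q ^ j) *
        (RatFunc.X - RatFunc.C ζ ^ q) ^ q ^ j)) :
    let T : RatFunc F := (RatFunc.X - RatFunc.C ζ ^ q)⁻¹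
    let Tσ : RatFunc F := (RatFunc.X - RatFunc.C ζ)⁻¹
    let br : ℕ → RatFunc F := fun k => T ^ q ^ k - if k % 2 = 0 then T else Tσ
    let α : RatFunc F := ∏ j ∈ Finset.Icc 2 d, (1 - br (2 * (j - 1)) / br (2 * j))
    let βd : RatFunc F := ∏ j ∈ Finset.Icc 1 d, (1 - br (2 * j - 1) / br (2 * j + 1))
    let βdm : RatFunc F := ∏ j ∈ Finset.Icc 1 (d - 1), (1 - br (2 * j - 1) / br (2 * j + 1))
    Lf (2 * d + 1) / Lf (2 * d) ^ q =
      br 1 ^ ((1 : ℤ) - (q : ℤ)) * br 2 *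
        ((RatFunc.X - RatFunc.C ζ ^ q) / (RatFunc.X - RatFunc.C ζ)) ^ (q - 1) *
        α ^ (q - 1) * βdm ^ q * βd⁻¹ :=
  stmt12_general q hq ζ d hd Lf hL0 hL
end

section
/- Let L be a field containing 𝔽_{q²}(t) and let ℓ ∈ L satisfy ℓ^{q−1} = (t − ζ^q)/(t − ζ) (= T^{σ−1}). Define the additive polynomial λ(X) = ℓ·(X^q + T·X). Then λ∘Ψ_x = Ψ^σ_x∘λ and λ∘Ψ_y = Ψ^σ_y∘λ in L[X]; that is, λ = ℓ·Ψ_{I_∞} is an isogeny from the standard rank one Drinfeld module Ψ to its twist Ψ^σ. Here Ψ_x(X) = T^{σ−1}X^{q²} + (T^σ + T^{(q−1)+σ})X^q + x·X, Ψ_y(X) = ζ·T^{σ−1}X^{q²} + (t·T^σ + ζ·T^{(q−1)+σ})X^q + y·X, Ψ^σ_x(X) = T^{1−σ}X^{q²} + (T + T^{1+(q−1)σ})X^q + x·X and Ψ^σ_y(X) = ζ^q·T^{1−σ}X^{q²} + (t·T + ζ^q·T^{1+(q−1)σ})X^q + y·X. -/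
open Polynomial
-- Structural lemma: an additive polynomial of degree q intertwines two additive polynomials of degree q^2 once the corresponding coefficient identities hold.
lemma isog_aux {L : Type*} [Field L] [Infinite L] (q : ℕ)
    (hfq : ∀ x y : L, (x + y) ^ q = x ^ q + y ^ q)
    (c3 c2 c1 d3 d2 d1 ℓ T Tq Tq2 lq lq2 : L)
    (hTq : T ^ q = Tq) (hTq2 : Tq ^ q = Tq2)
    (hlq : ℓ ^ q = lq) (hlq2 : lq ^ q = lq2)
    (h1 : ℓ * c3 ^ q = d3 * lq2)
    (h2 : ℓ * c2 ^ q + ℓ * T * c3 = d3 * lq2 * Tq2 + d2 * lq)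
    (h3 : ℓ * c1 ^ q + ℓ * T * c2 = d2 * lq * Tq + d1 * ℓ)
    (h4 : ℓ * T * c1 = d1 * ℓ * T) :
    (C ℓ * (X ^ q + C T * X)).comp (C c3 * X ^ q ^ 2 + C c2 * X ^ q + C c1 * X)
      = (C d3 * X ^ q ^ 2 + C d2 * X ^ q + C d1 * X).comp (C ℓ * (X ^ q + C T * X)) := by
  apply Polynomial.funext; intro r
  simp only [eval_comp, eval_add, eval_mul, eval_pow, eval_C, eval_X]
  have e1 : ∀ x : L, (x ^ (q^2)) ^ q = x ^ (q^3) := by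
    intro x; rw [← pow_mul, show q^2*q = q^3 by ring]
  have e2 : ∀ x : L, (x ^ q) ^ q = x ^ (q^2) := by
    intro x; rw [← pow_mul, show q*q = q^2 by ring]
  have E2 : (ℓ * (r ^ q + T * r)) ^ q = lq * (r ^ (q^2) + Tq * r ^ q) := by
    rw [mul_pow, hfq, mul_pow, hTq, hlq, e2]
  have E3 : (ℓ * (r ^ q + T * r)) ^ (q^2) = lq2 * (r ^ (q^3) + Tq2 * r ^ (q^2)) := by
    rw [← e2 (ℓ * (r ^ q + T * r)), E2, mul_pow, hfq, mul_pow, hTq2, hlq2, e1, e2]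
  have E1 : (c3 * r ^ (q^2) + c2 * r ^ q + c1 * r) ^ q
      = c3 ^ q * r ^ (q^3) + c2 ^ q * r ^ (q^2) + c1 ^ q * r ^ q := by
    rw [hfq, hfq, mul_pow, mul_pow, mul_pow, e1, e2]
  rw [E1, E2, E3]
  linear_combination r ^ (q^3) * h1 + r ^ (q^2) * h2 + r ^ q * h3 + r * h4
set_option maxHeartbeats 1000000 in
/-- Lemma 3.14: `λ = ℓ·(τ + T)` is an isogeny from the standard rank one Drinfeld
module `Ψ` to its twist `Ψ^σ`. -/
theorem stmt13 {F L : Type*} [Field F] [Fintype F] [Field L] [Algebra (RatFunc F) L]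
    (q : ℕ) (hq : Fintype.card F = q ^ 2) (ζ : F) (hζ : ζ ^ q ≠ ζ)
    (ℓ : L) :
    let t : L := algebraMap (RatFunc F) L RatFunc.X
    let z : L := algebraMap (RatFunc F) L (RatFunc.C ζ)
    let T : L := (t - z ^ q)⁻¹
    let Ψx : Polynomial L := C ((t - z ^ q) / (t - z)) * X ^ q ^ 2 +
      C ((t - z)⁻¹ + ((t - z ^ q) ^ (q - 1) * (t - z))⁻¹) * X ^ q +
      C (((t - z) * (t - z ^ q))⁻¹) * X
    let Ψy : Polynomial L := C (z * ((t - z ^ q) / (t - z))) * X ^ q ^ 2 +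
      C (t * (t - z)⁻¹ + z * ((t - z ^ q) ^ (q - 1) * (t - z))⁻¹) * X ^ q +
      C (t * ((t - z) * (t - z ^ q))⁻¹) * X
    let Ψσx : Polynomial L := C ((t - z) / (t - z ^ q)) * X ^ q ^ 2 +
      C ((t - z ^ q)⁻¹ + ((t - z ^ q) * (t - z) ^ (q - 1))⁻¹) * X ^ q +
      C (((t - z) * (t - z ^ q))⁻¹) * X
    let Ψσy : Polynomial L := C (z ^ q * ((t - z) / (t - z ^ q))) * X ^ q ^ 2 +
      C (t * (t - z ^ q)⁻¹ + z ^ q * ((t - z ^ q) * (t - z) ^ (q - 1))⁻¹) * X ^ q +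
      C (t * ((t - z) * (t - z ^ q))⁻¹) * X
    let lam : Polynomial L := C ℓ * (X ^ q + C T * X)
    ℓ ^ (q - 1) = (t - z ^ q) / (t - z) →
      lam.comp Ψx = Ψσx.comp lam ∧ lam.comp Ψy = Ψσy.comp lam := by
  intro t z T Ψx Ψy Ψσx Ψσy lam hl
  -- characteristic and Frobenius facts
  obtain ⟨n, hp, hcard⟩ := FiniteField.card F (ringChar F)
  haveI : Fact (ringChar F).Prime := ⟨hp⟩
  have hqd : q ∣ (ringChar F) ^ (n : ℕ) := by
    rw [← hcard, hq]; exact dvd_pow_self q two_ne_zero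
  obtain ⟨m, -, hqpm⟩ := (Nat.dvd_prime_pow hp).mp hqd
  have hinj : Function.Injective (algebraMap (RatFunc F) L) :=
    (algebraMap (RatFunc F) L).injective
  haveI : CharP L (ringChar F) :=
    charP_of_injective_ringHom
      (((algebraMap (RatFunc F) L).comp (algebraMap F (RatFunc F))).injective) _
  haveI : Infinite L :=
    Infinite.of_injective (fun p : Polynomial F => algebraMap (RatFunc F) L (algebraMap _ _ p))
      (hinj.comp (RatFunc.algebraMap_injective F))
  have hfq : ∀ x y : L, (x + y) ^ q = x ^ q + y ^ q := by
    intro x y; rw [hqpm]; exact add_pow_char_pow x y _ m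
  have hfqs : ∀ x y : L, (x - y) ^ q = x ^ q - y ^ q := by
    intro x y; rw [hqpm]; exact sub_pow_char_pow x y m
  have h1q : 1 < q := by
    have : 1 < q ^ 2 := by rw [← hq]; exact Fintype.one_lt_card
    exact (Nat.one_lt_pow_iff two_ne_zero).mp this
  have hq1 : q - 1 + 1 = q := by omega
  -- nonvanishing
  have hcne : ∀ c : F, t - algebraMap (RatFunc F) L (RatFunc.C c) ≠ 0 := by
    intro c hc
    rw [sub_eq_zero] at hc
    have h2 : (RatFunc.X : RatFunc F) = RatFunc.C c := hinj hc
    rw [← RatFunc.algebraMap_X, ← RatFunc.algebraMap_C] at h2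
    exact Polynomial.X_ne_C c (RatFunc.algebraMap_injective F h2)
  have hbne : t - z ≠ 0 := hcne ζ
  have hane : t - z ^ q ≠ 0 := by
    have : z ^ q = algebraMap (RatFunc F) L (RatFunc.C (ζ ^ q)) := by
      rw [map_pow, map_pow]
    rw [this]; exact hcne _
  -- Frobenius on the basic linear terms
  have hzz : z ^ q ^ 2 = z := by
    rw [← map_pow, ← map_pow, ← hq, FiniteField.pow_card]
  have hwq : (z ^ q) ^ q = z := by
    rw [← pow_mul, show q * q = q ^ 2 by ring, hzz]
  have haq : (t - z ^ q) ^ q = t ^ q - z := by rw [hfqs, hwq]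
  have hbq : (t - z) ^ q = t ^ q - z ^ q := by rw [hfqs]
  have hAq : (t ^ q - z) ^ q = (t ^ q) ^ q - z ^ q := by rw [hfqs]
  have hAne : t ^ q - z ≠ 0 := by rw [← haq]; exact pow_ne_zero _ hane
  have hBne : t ^ q - z ^ q ≠ 0 := by rw [← hbq]; exact pow_ne_zero _ hbne
  have hA2ne : (t ^ q) ^ q - z ^ q ≠ 0 := by rw [← hAq]; exact pow_ne_zero _ hAne
  -- (q-1)-st powers
  have hpa : (t - z ^ q) ^ (q - 1) = (t ^ q - z) / (t - z ^ q) := by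
    rw [eq_div_iff hane, ← pow_succ, hq1, haq]
  have hpb : (t - z) ^ (q - 1) = (t ^ q - z ^ q) / (t - z) := by
    rw [eq_div_iff hbne, ← pow_succ, hq1, hbq]
  have hpA : (t ^ q - z) ^ (q - 1) = ((t ^ q) ^ q - z ^ q) / (t ^ q - z) := by
    rw [eq_div_iff hAne, ← pow_succ, hq1, hAq]
  have hlq : ℓ ^ q = ℓ * ((t - z ^ q) / (t - z)) := by
    conv_lhs => rw [← hq1]
    rw [pow_succ, hl]; ring
  have ha' : (t - z ^ q) * (t - z ^ q)⁻¹ = 1 := mul_inv_cancel₀ hane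
  have hb' : (t - z) * (t - z)⁻¹ = 1 := mul_inv_cancel₀ hbne
  have hA' : (t ^ q - z) * (t ^ q - z)⁻¹ = 1 := mul_inv_cancel₀ hAne
  have hB' : (t ^ q - z ^ q) * (t ^ q - z ^ q)⁻¹ = 1 := mul_inv_cancel₀ hBne
  have hA2' : ((t ^ q) ^ q - z ^ q) * ((t ^ q) ^ q - z ^ q)⁻¹ = 1 := mul_inv_cancel₀ hA2ne
  constructor
  · refine isog_aux q hfq
      ((t - z ^ q) / (t - z)) ((t - z)⁻¹ + ((t - z ^ q) ^ (q - 1) * (t - z))⁻¹)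
      (((t - z) * (t - z ^ q))⁻¹)
      ((t - z) / (t - z ^ q)) ((t - z ^ q)⁻¹ + ((t - z ^ q) * (t - z) ^ (q - 1))⁻¹)
      (((t - z) * (t - z ^ q))⁻¹)
      ℓ ((t - z ^ q)⁻¹) ((t ^ q - z)⁻¹) (((t ^ q) ^ q - z ^ q)⁻¹)
      (ℓ * ((t - z ^ q) / (t - z)))
      (ℓ * ((t - z ^ q) / (t - z)) * ((t ^ q - z) / (t ^ q - z ^ q)))
      ?_ ?_ ?_ ?_ ?_ ?_ ?_ ?_
    · rw [inv_pow, haq]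
    · rw [inv_pow, hAq]
    · exact hlq
    · rw [mul_pow, hlq, div_pow, haq, hbq]
    · rw [div_pow, haq, hbq]
      simp only [mul_inv, inv_div, div_eq_mul_inv, inv_inv]
      linear_combination (z * (t ^ q) * ℓ * (t - z)⁻¹ * (t ^ q - z ^ q)⁻¹ + (-1) * z ^ 2 * ℓ * (t - z)⁻¹ * (t ^ q - z ^ q)⁻¹ + (-1) * t * (t ^ q) * ℓ * (t - z)⁻¹ * (t ^ q - z ^ q)⁻¹ + t * z * ℓ * (t - z)⁻¹ * (t ^ q - z ^ q)⁻¹) * ha' + ((-1) * (t ^ q) * ℓ * (t ^ q - z ^ q)⁻¹ + z * ℓ * (t ^ q - z ^ q)⁻¹) * hb'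
    · rw [hfq, inv_pow, inv_pow, mul_pow, hbq, pow_right_comm, haq, hpA, hpb]
      simp only [mul_inv, inv_div, div_eq_mul_inv, inv_inv]
      linear_combination (z * ℓ * (t - z)⁻¹ * (t ^ q - z ^ q)⁻¹ + z * (t ^ q) * ℓ * (t - z)⁻¹ * (t ^ q - z ^ q)⁻¹ * ((t ^ q) ^ q - z ^ q)⁻¹ + (-1) * z ^ 2 * ℓ * (t - z)⁻¹ * (t ^ q - z ^ q)⁻¹ * ((t ^ q) ^ q - z ^ q)⁻¹ + (-1) * t * ℓ * (t - z)⁻¹ * (t ^ q - z ^ q)⁻¹ + (-1) * t * (t ^ q) * ℓ * (t - z)⁻¹ * (t ^ q - z ^ q)⁻¹ * ((t ^ q) ^ q - z ^ q)⁻¹ + t * z * ℓ * (t - z)⁻¹ * (t ^ q - z ^ q)⁻¹ * ((t ^ q) ^ q - z ^ q)⁻¹) * ha' + ((-1) * ℓ * (t ^ q - z ^ q)⁻¹ + (-1) * (t ^ q) * ℓ * (t ^ q - z ^ q)⁻¹ * ((t ^ q) ^ q - z ^ q)⁻¹ + z * ℓ * (t ^ q - z ^ q)⁻¹ * ((t ^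 q) ^ q - z ^ q)⁻¹) * hb'
    · rw [inv_pow, mul_pow, hbq, haq, hpa, hpb]
      simp only [mul_inv, inv_div, div_eq_mul_inv, inv_inv]
      linear_combination (z * ℓ * (t - z)⁻¹ * (t ^ q - z)⁻¹ * (t ^ q - z ^ q)⁻¹ + (-1) * t * ℓ * (t - z)⁻¹ * (t ^ q - z)⁻¹ * (t ^ q - z ^ q)⁻¹) * ha' + ((-1) * ℓ * (t ^ q - z)⁻¹ * (t ^ q - z ^ q)⁻¹) * hb'
    · ring
  · refine isog_aux q hfq
      (z * ((t - z ^ q) / (t - z)))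
      (t * (t - z)⁻¹ + z * ((t - z ^ q) ^ (q - 1) * (t - z))⁻¹)
      (t * ((t - z) * (t - z ^ q))⁻¹)
      (z ^ q * ((t - z) / (t - z ^ q)))
      (t * (t - z ^ q)⁻¹ + z ^ q * ((t - z ^ q) * (t - z) ^ (q - 1))⁻¹)
      (t * ((t - z) * (t - z ^ q))⁻¹)
      ℓ ((t - z ^ q)⁻¹) ((t ^ q - z)⁻¹) (((t ^ q) ^ q - z ^ q)⁻¹)
      (ℓ * ((t - z ^ q) / (t - z)))
      (ℓ * ((t - z ^ q) / (t - z)) * ((t ^ q - z) / (t ^ q - z ^ q)))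
      ?_ ?_ ?_ ?_ ?_ ?_ ?_ ?_
    · rw [inv_pow, haq]
    · rw [inv_pow, hAq]
    · exact hlq
    · rw [mul_pow, hlq, div_pow, haq, hbq]
    · rw [mul_pow, div_pow, haq, hbq]
      simp only [mul_inv, inv_div, div_eq_mul_inv, inv_inv]
      linear_combination (z * (z ^ q) * (t ^ q) * ℓ * (t - z)⁻¹ * (t ^ q - z ^ q)⁻¹ + (-1) * z ^ 2 * (z ^ q) * ℓ * (t - z)⁻¹ * (t ^ q - z ^ q)⁻¹ + (-1) * t * (z ^ q) * (t ^ q) * ℓ * (t - z)⁻¹ * (t ^ q - z ^ q)⁻¹ + t * z * (z ^ q) * ℓ * (t - z)⁻¹ * (t ^ q - z ^ q)⁻¹) * ha' + ((-1) * (z ^ q) * (t ^ q) * ℓ * (t ^ q - z ^ q)⁻¹ + z * (z ^ q) * ℓ * (t ^ q - z ^ q)⁻¹) * hb'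
    · rw [hfq, mul_pow, mul_pow, inv_pow, inv_pow, mul_pow, hbq, pow_right_comm, haq, hpA, hpb]
      simp only [mul_inv, inv_div, div_eq_mul_inv, inv_inv]
      linear_combination (z * ℓ * (t - z)⁻¹ + z * (z ^ q) * ℓ * (t - z)⁻¹ * (t ^ q - z ^ q)⁻¹ + z * (z ^ q) * (t ^ q) * ℓ * (t - z)⁻¹ * (t ^ q - z ^ q)⁻¹ * ((t ^ q) ^ q - z ^ q)⁻¹ + (-1) * z ^ 2 * (z ^ q) * ℓ * (t - z)⁻¹ * (t ^ q - z ^ q)⁻¹ * ((t ^ q) ^ q - z ^ q)⁻¹ + (-1) * t * ℓ * (t - z)⁻¹ + (-1) * t * (z ^ q) * ℓ * (t - z)⁻¹ * (t ^ q - z ^ q)⁻¹ + (-1) * t * (z ^ q) * (t ^ q) * ℓ * (t - z)⁻¹ * (t ^ q - z ^ q)⁻¹ * ((t ^ q) ^ q - z ^ q)⁻¹ + t * z * (z ^ q) * ℓ * (t - z)⁻¹ * (t ^ q - z ^ q)⁻¹ * ((t ^ q) ^ q - z ^ q)⁻¹) * ha' + ((-1) * ℓ + (-1) * (z ^ q)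 * ℓ * (t ^ q - z ^ q)⁻¹ + (-1) * (z ^ q) * (t ^ q) * ℓ * (t ^ q - z ^ q)⁻¹ * ((t ^ q) ^ q - z ^ q)⁻¹ + z * (z ^ q) * ℓ * (t ^ q - z ^ q)⁻¹ * ((t ^ q) ^ q - z ^ q)⁻¹) * hb' + (ℓ) * hB'
    · rw [mul_pow, inv_pow, mul_pow, hbq, haq, hpa, hpb]
      simp only [mul_inv, inv_div, div_eq_mul_inv, inv_inv]
      linear_combination (z * ℓ * (t - z)⁻¹ * (t ^ q - z)⁻¹ + z * (z ^ q) * ℓ * (t - z)⁻¹ * (t ^ q - z)⁻¹ * (t ^ q - z ^ q)⁻¹ + (-1) * t * ℓ * (t - z)⁻¹ * (t ^ q - z)⁻¹ + (-1) * t * (z ^ q) * ℓ * (t - z)⁻¹ * (t ^ q - z)⁻¹ * (t ^ q - z ^ q)⁻¹) * ha' + ((-1) * ℓ * (t ^ q - z)⁻¹ + (-1) * (z ^ q) * ℓ * (t ^ q - z)⁻¹ * (t ^ q - z ^ q)⁻¹) * hb' + (ℓ * (t ^ q - z)⁻¹) * hB'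
    · ring
end

section
/- Let q = 2, let ζ ∈ 𝔽₄ satisfy ζ² + ζ + 1 = 0, and let π = t² + t + 1 ∈ 𝔽₂[t]. Work in an algebraically closed field Ω containing 𝔽₄(t); let √t ∈ Ω be a square root of t, set √x = 1/(t + 1 + √t) and √y = √t·√x (so (√x)² = 1/π = x and (√y)² = t/π = y), and let u ∈ Ω be a cube root of 1/((√t − ζ)(t − ζ)). Define ψ_{√x}(X) = X⁴ + ((√x + u³)/u)X² + √x·X and ψ_{√y}(X) = ζ·X⁴ + ((√y + ζ·u³)/u)X² + √y·X, and set φ_x = ψ_{√x}∘ψ_{√x} and φ_y = ψ_{√y}∘ψ_{√y}. Let λ = ζ/(u·(√t − ζ²)) and ν = u/(ζ·(√t − ζ)). Then: (i) ν³ = −1/((t − ζ)(t − ζ²)²) = −T^{σ+2}; (ii) (φ_x, φ_y) coincides with the rank two Drinfeld module φ^{(λ,ν)} (i.e. φ_x = φ^{(λ,ν)}_x and φ_y = φ^{(λ,ν)}_y); and (iii) the J-invariant satisfies J(φ) = λ⁵ = ν·(√t − ζ)³/(√t − ζ²). -/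
/-!
In characteristic 2, with `s = √t` and `ζ² + ζ + 1 = 0`, one has `t - ζ = (s - ζ²)²`,
`t - ζ² = (s - ζ)²` and `t + s + 1 = (s - ζ)(s - ζ²)`, so the hypothesis on `u` says
`u³ (s - ζ)(s - ζ²)² = 1`. Modulo this relation every coefficient becomes a polynomial in
`s`, `ζ`, `u`: `νλ = √x = u³(s - ζ²)` and `α = α̃ = u²(s - ζ)`, so that `h = g₁ = ψ_{√x}` and the
claim for `φ_x` is immediate. For `φ_y`, a composite of two additive quartics `eX⁴ + aX² + bX`
has five coefficients, and both sides agree on each of them.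
-/

open Polynomial

section CharTwo

variable {R : Type*} [CommRing R] [CharP R 2]

theorem comp_additive_quartic (e a b e' a' b' : R) :
    (C e * X ^ 4 + C a * X ^ 2 + C b * X).comp (C e' * X ^ 4 + C a' * X ^ 2 + C b' * X) =
      C (e * e' ^ 4) * X ^ 16 + C (e * a' ^ 4 + a * e' ^ 2) * X ^ 8 +
        C (e * b' ^ 4 + a * a' ^ 2 + b * e') * X ^ 4 + C (a * b' ^ 2 + b * a') * X ^ 2 +
        C (b * b') * X := by
  simp only [add_comp, mul_comp, pow_comp, X_comp, C_comp, map_add, map_mul, map_pow]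
  -- the two sides differ by a polynomial with even coefficients
  linear_combination (norm := ring_nf)
  reduce_mod_char!

theorem comp_additive_quartic_eq_C_mul_comp {c e a b a₁ b₁ a₂ b₂ : R}
    (h16 : e * e ^ 4 = c) (h8 : e * a ^ 4 + a * e ^ 2 = c * (a₂ ^ 4 + a₁))
    (h4 : e * b ^ 4 + a * a ^ 2 + b * e = c * (b₂ ^ 4 + a₁ * a₂ ^ 2 + b₁))
    (h2 : a * b ^ 2 + b * a = c * (a₁ * b₂ ^ 2 + b₁ * a₂)) (h1 : b * b = c * (b₁ * b₂)) :
    (C e * X ^ 4 + C a * X ^ 2 + C b * X).comp (C e * X ^ 4 + C a * X ^ 2 + C b * X) =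
      C c * (X ^ 4 + C a₁ * X ^ 2 + C b₁ * X).comp (X ^ 4 + C a₂ * X ^ 2 + C b₂ * X) := by
  have monic (a b : R) : X ^ 4 + C a * X ^ 2 + C b * X = C 1 * X ^ 4 + C a * X ^ 2 + C b * X := by
    rw [C_1, one_mul]
  rw [monic a₁, monic a₂, comp_additive_quartic, comp_additive_quartic, h16, h8, h4, h2, h1]
  simp only [map_add, map_mul, map_pow, map_one]
  ring

end CharTwo

theorem charP_two_of_card_eq_four {F : Type*} [Field F] [Fintype F]
    (hF : Fintype.card F = 4) : CharP F 2 := by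
  have h4 : ((Fintype.card F : ℕ) : F) = 0 := FiniteField.cast_card_eq_zero F
  rw [hF] at h4
  have h2 : (2 : F) ^ 2 = 0 := by norm_num; exact_mod_cast h4
  exact CharTwo.of_one_ne_zero_of_two_eq_zero one_ne_zero (pow_eq_zero_iff two_ne_zero |>.mp h2)

theorem algebraMap_ratFuncX_ne_algebraMap_C {F L : Type*} [Field F] [Field L]
    [Algebra (RatFunc F) L] (c : F) :
    algebraMap (RatFunc F) L RatFunc.X ≠ algebraMap (RatFunc F) L (RatFunc.C c) := by
  refine (algebraMap (RatFunc F) L).injective.ne ?_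
  rw [← RatFunc.algebraMap_X, ← RatFunc.algebraMap_C]
  exact (RatFunc.algebraMap_injective F).ne (X_ne_C c)

section CubeRootOfUnity

variable {K : Type*} [Field K] {z : K}

theorem ne_zero_of_sq_add_add_one (hz : z ^ 2 + z + 1 = 0) : z ≠ 0 := by
  rintro rfl
  norm_num at hz

theorem pow_three_eq_one_of_sq_add_add_one (hz : z ^ 2 + z + 1 = 0) : z ^ 3 = 1 := by
  linear_combination (z - 1) * hz

theorem inv_eq_sq_of_sq_add_add_one (hz : z ^ 2 + z + 1 = 0) : z⁻¹ = z ^ 2 :=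
  inv_eq_of_mul_eq_one_right (by linear_combination (z - 1) * hz)

variable [CharP K 2]

theorem sub_sq_eq_one_of_sq_add_add_one (hz : z ^ 2 + z + 1 = 0) : z - z ^ 2 = 1 := by
  grind

theorem one_sub_sq_eq_of_sq_add_add_one (hz : z ^ 2 + z + 1 = 0) : 1 - z ^ 2 = z := by
  grind

theorem sq_sub_eq_sub_sq_sq_of_sq_add_add_one (hz : z ^ 2 + z + 1 = 0) (s : K) :
    s ^ 2 - z = (s - z ^ 2) ^ 2 := by
  grind

theorem sq_add_add_one_eq_mul_of_sq_add_add_one (hz : z ^ 2 + z + 1 = 0) (s : K) :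
    s ^ 2 + 1 + s = (s - z) * (s - z ^ 2) := by
  grind

end CubeRootOfUnity

theorem zpow_one_sub_two {K : Type*} [DivisionRing K] (x : K) : x ^ ((1 : ℤ) - 2) = x⁻¹ := by
  rw [show (1 : ℤ) - 2 = -1 by norm_num, zpow_neg_one]

namespace HayesSquare

/- The quantities of the example over an arbitrary field `K`, with `t` replaced by `s ^ 2`
(`s` plays `√t`); `invPi z s` is `x = 1/π`. -/

variable {K : Type*} [Field K]

def sqrtX (s : K) : K := (s ^ 2 + 1 + s)⁻¹

def invPi (z s : K) : K := ((s ^ 2 - z) * (s ^ 2 - z ^ 2))⁻¹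

def lam (z s u : K) : K := z / (u * (s - z ^ 2))

def nu (z s u : K) : K := u / (z * (s - z))

def alpha (z s u : K) : K :=
  lam z s u ^ 4 / (1 - z ^ ((1 : ℤ) - 2)) + nu z s u * (s ^ 2 - z ^ 2) / (z * lam z s u)

def alphaTilde (z s u : K) : K :=
  -nu z s u * (s ^ 2 - z ^ 2) ^ 2 * (s ^ 2 - z) ^ ((1 : ℤ) - 2) / (z * lam z s u ^ 4) +
    z ^ 2 * lam z s u / (z - z ^ 2)

def betaTilde (z s u : K) : K :=
  -nu z s u * (s ^ 2 - z ^ 2) ^ 2 * (s ^ 2 - z) ^ ((1 : ℤ) - 2) / (z * lam z s u ^ 4) +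
    z * lam z s u / (z - z ^ 2)

noncomputable def psiSqrtX (s u : K) : K[X] :=
  X ^ 4 + C ((sqrtX s + u ^ 3) / u) * X ^ 2 + C (sqrtX s) * X

noncomputable def psiSqrtY (z s u : K) : K[X] :=
  C z * X ^ 4 + C ((s * sqrtX s + z * u ^ 3) / u) * X ^ 2 + C (s * sqrtX s) * X

noncomputable def hPoly (z s u : K) : K[X] :=
  X ^ 4 + C (alpha z s u) * X ^ 2 + C (nu z s u * lam z s u) * X

noncomputable def g₁Poly (z s u : K) : K[X] :=
  X ^ 4 + C (alphaTilde z s u) * X ^ 2 + C (invPi z s / (nu z s u * lam z s u)) * X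

noncomputable def g₂Poly (z s u : K) : K[X] :=
  X ^ 4 + C (betaTilde z s u) * X ^ 2 + C (s ^ 2 * invPi z s / (z ^ 2 * nu z s u * lam z s u)) * X

variable {z s u : K}

theorem ne_zero_of_cube_mul_eq_one (hu : u ^ 3 * (s - z) * (s - z ^ 2) ^ 2 = 1) :
    u ≠ 0 ∧ s - z ≠ 0 ∧ s - z ^ 2 ≠ 0 := by
  have h := left_ne_zero_of_mul_eq_one hu
  exact ⟨pow_ne_zero_iff three_ne_zero |>.mp (left_ne_zero_of_mul h), right_ne_zero_of_mul h,
    pow_ne_zero_iff two_ne_zero |>.mp (right_ne_zero_of_mul_eq_one hu)⟩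

theorem lam_eq (hu : u ^ 3 * (s - z) * (s - z ^ 2) ^ 2 = 1) :
    lam z s u = z * u ^ 2 * (s - z) * (s - z ^ 2) := by
  obtain ⟨hu0, -, hb⟩ := ne_zero_of_cube_mul_eq_one hu
  rw [lam, div_eq_iff (mul_ne_zero hu0 hb)]
  linear_combination (-z) * hu

theorem nu_eq (hz : z ^ 2 + z + 1 = 0) (hu : u ^ 3 * (s - z) * (s - z ^ 2) ^ 2 = 1) :
    nu z s u = z ^ 2 * u ^ 4 * (s - z ^ 2) ^ 2 := by
  obtain ⟨-, ha, -⟩ := ne_zero_of_cube_mul_eq_one hu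
  rw [nu, div_eq_iff (mul_ne_zero (ne_zero_of_sq_add_add_one hz) ha)]
  linear_combination (-z ^ 3 * u) * hu - u * pow_three_eq_one_of_sq_add_add_one hz

theorem lam_pow_five (hz : z ^ 2 + z + 1 = 0) (hu : u ^ 3 * (s - z) * (s - z ^ 2) ^ 2 = 1) :
    lam z s u ^ 5 = nu z s u * (s - z) ^ 3 / (s - z ^ 2) := by
  rw [lam_eq hu, nu_eq hz hu, eq_div_iff (ne_zero_of_cube_mul_eq_one hu).2.2]
  linear_combination z ^ 2 * u ^ 4 * (s - z) ^ 3 * (s - z ^ 2) ^ 2 *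
    (z ^ 3 * (u ^ 3 * (s - z) * (s - z ^ 2) ^ 2 + 1) * hu + pow_three_eq_one_of_sq_add_add_one hz)

variable [CharP K 2]

theorem cube_mul_eq_one (hz : z ^ 2 + z + 1 = 0) (hsz : s ^ 2 ≠ z) (hsz2 : s ^ 2 ≠ z ^ 2)
    (hu : u ^ 3 = ((s - z) * (s ^ 2 - z))⁻¹) : u ^ 3 * (s - z) * (s - z ^ 2) ^ 2 = 1 := by
  have ha : s - z ≠ 0 := fun h ↦ hsz2 (by rw [sub_eq_zero.mp h])
  rw [mul_assoc, ← sq_sub_eq_sub_sq_sq_of_sq_add_add_one hz, hu,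
    inv_mul_cancel₀ (mul_ne_zero ha (sub_ne_zero.mpr hsz))]

theorem nu_pow_three (hz : z ^ 2 + z + 1 = 0) (hu : u ^ 3 * (s - z) * (s - z ^ 2) ^ 2 = 1) :
    nu z s u ^ 3 = -((s ^ 2 - z) * (s ^ 2 - z ^ 2) ^ 2)⁻¹ := by
  rw [CharTwo.neg_eq, sq_sub_eq_sub_sq_sq_of_sq_add_add_one hz, ← sub_pow_char, nu_eq hz hu]
  refine eq_inv_of_mul_eq_one_left ?_
  linear_combination z ^ 6 * (u ^ 3 * (s - z) * (s - z ^ 2) ^ 2 + 1) *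
    ((u ^ 3 * (s - z) * (s - z ^ 2) ^ 2) ^ 2 + 1) * hu +
    (z ^ 3 + 1) * pow_three_eq_one_of_sq_add_add_one hz

theorem sqrtX_eq (hz : z ^ 2 + z + 1 = 0) (hu : u ^ 3 * (s - z) * (s - z ^ 2) ^ 2 = 1) :
    sqrtX s = u ^ 3 * (s - z ^ 2) := by
  rw [sqrtX, sq_add_add_one_eq_mul_of_sq_add_add_one hz, inv_eq_of_mul_eq_one_left]
  linear_combination hu

theorem invPi_eq (hz : z ^ 2 + z + 1 = 0) : invPi z s = sqrtX s ^ 2 := by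
  rw [invPi, sqrtX, sq_sub_eq_sub_sq_sq_of_sq_add_add_one hz, ← sub_pow_char,
    sq_add_add_one_eq_mul_of_sq_add_add_one hz, inv_pow, mul_pow, mul_comm]

theorem sqrtX_ne_zero (hz : z ^ 2 + z + 1 = 0) (hu : u ^ 3 * (s - z) * (s - z ^ 2) ^ 2 = 1) :
    sqrtX s ≠ 0 := by
  obtain ⟨hu0, -, hb⟩ := ne_zero_of_cube_mul_eq_one hu
  rw [sqrtX_eq hz hu]
  exact mul_ne_zero (pow_ne_zero 3 hu0) hb

theorem nu_mul_lam (hz : z ^ 2 + z + 1 = 0) (hu : u ^ 3 * (s - z) * (s - z ^ 2) ^ 2 = 1) :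
    nu z s u * lam z s u = sqrtX s := by
  rw [nu_eq hz hu, lam_eq hu, sqrtX_eq hz hu]
  linear_combination z ^ 3 * u ^ 3 * (s - z ^ 2) * hu +
    u ^ 3 * (s - z ^ 2) * pow_three_eq_one_of_sq_add_add_one hz

theorem alpha_eq (hz : z ^ 2 + z + 1 = 0) (hu : u ^ 3 * (s - z) * (s - z ^ 2) ^ 2 = 1) :
    alpha z s u = u ^ 2 * (s - z) := by
  obtain ⟨hu0, ha, hb⟩ := ne_zero_of_cube_mul_eq_one hu
  have hz0 := ne_zero_of_sq_add_add_one hz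
  rw [alpha, zpow_one_sub_two, inv_eq_sq_of_sq_add_add_one hz, one_sub_sq_eq_of_sq_add_add_one hz,
    ← sub_pow_char, lam_eq hu, nu_eq hz hu]
  have h1 : (z * u ^ 2 * (s - z) * (s - z ^ 2)) ^ 4 / z = u ^ 2 * (s - z) ^ 2 := by
    rw [div_eq_iff hz0]
    linear_combination z * u ^ 2 * (s - z) ^ 2 *
      (z ^ 3 * (u ^ 3 * (s - z) * (s - z ^ 2) ^ 2 + 1) * hu + pow_three_eq_one_of_sq_add_add_one hz)
  have h2 : z ^ 2 * u ^ 4 * (s - z ^ 2) ^ 2 * (s - z) ^ 2 / (z * (z * u ^ 2 * (s - z) * (s - z ^ 2)))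
      = u ^ 2 * (s - z) * (s - z ^ 2) := by
    field_simp
  rw [h1, h2]
  grind

theorem nu_mul_zpow_div_lam_pow_four (hz : z ^ 2 + z + 1 = 0)
    (hu : u ^ 3 * (s - z) * (s - z ^ 2) ^ 2 = 1) :
    nu z s u * (s ^ 2 - z ^ 2) ^ 2 * (s ^ 2 - z) ^ ((1 : ℤ) - 2) / (z * lam z s u ^ 4) =
      u ^ 2 * (s - z) ^ 2 := by
  obtain ⟨hu0, ha, hb⟩ := ne_zero_of_cube_mul_eq_one hu
  have hz0 := ne_zero_of_sq_add_add_one hz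
  rw [zpow_one_sub_two, ← sub_pow_char, sq_sub_eq_sub_sq_sq_of_sq_add_add_one hz, lam_eq hu,
    nu_eq hz hu]
  field_simp
  linear_combination -z ^ 3 * (u ^ 3 * (s - z) * (s - z ^ 2) ^ 2 + 1) * hu -
    pow_three_eq_one_of_sq_add_add_one hz

theorem alphaTilde_eq (hz : z ^ 2 + z + 1 = 0) (hu : u ^ 3 * (s - z) * (s - z ^ 2) ^ 2 = 1) :
    alphaTilde z s u = u ^ 2 * (s - z) := by
  rw [alphaTilde, neg_mul, neg_mul, neg_div, nu_mul_zpow_div_lam_pow_four hz hu,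
    sub_sq_eq_one_of_sq_add_add_one hz, lam_eq hu]
  grind

theorem betaTilde_eq (hz : z ^ 2 + z + 1 = 0) (hu : u ^ 3 * (s - z) * (s - z ^ 2) ^ 2 = 1) :
    betaTilde z s u = z * s * u ^ 2 * (s - z) := by
  rw [betaTilde, neg_mul, neg_mul, neg_div, nu_mul_zpow_div_lam_pow_four hz hu,
    sub_sq_eq_one_of_sq_add_add_one hz, lam_eq hu]
  grind

theorem sqrtX_add_cube_div_eq (hz : z ^ 2 + z + 1 = 0)
    (hu : u ^ 3 * (s - z) * (s - z ^ 2) ^ 2 = 1) : (sqrtX s + u ^ 3) / u = u ^ 2 * (s - z) := by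
  rw [sqrtX_eq hz hu, div_eq_iff (ne_zero_of_cube_mul_eq_one hu).1]
  grind

theorem mul_sqrtX_add_cube_div_eq (hz : z ^ 2 + z + 1 = 0)
    (hu : u ^ 3 * (s - z) * (s - z ^ 2) ^ 2 = 1) :
    (s * sqrtX s + z * u ^ 3) / u = u ^ 2 * (s - z) * (s + 1) := by
  rw [sqrtX_eq hz hu, div_eq_iff (ne_zero_of_cube_mul_eq_one hu).1]
  grind

theorem sq_mul_invPi_div_eq (hz : z ^ 2 + z + 1 = 0)
    (hu : u ^ 3 * (s - z) * (s - z ^ 2) ^ 2 = 1) :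
    s ^ 2 * invPi z s / (z ^ 2 * nu z s u * lam z s u) = z * s ^ 2 * sqrtX s := by
  rw [mul_assoc, nu_mul_lam hz hu, invPi_eq hz, div_eq_iff
    (mul_ne_zero (pow_ne_zero 2 (ne_zero_of_sq_add_add_one hz)) (sqrtX_ne_zero hz hu))]
  linear_combination -s ^ 2 * sqrtX s ^ 2 * pow_three_eq_one_of_sq_add_add_one hz

theorem hPoly_eq_psiSqrtX (hz : z ^ 2 + z + 1 = 0) (hu : u ^ 3 * (s - z) * (s - z ^ 2) ^ 2 = 1) :
    hPoly z s u = psiSqrtX s u := by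
  rw [hPoly, psiSqrtX, alpha_eq hz hu, nu_mul_lam hz hu, sqrtX_add_cube_div_eq hz hu]

theorem g₁Poly_eq_psiSqrtX (hz : z ^ 2 + z + 1 = 0) (hu : u ^ 3 * (s - z) * (s - z ^ 2) ^ 2 = 1) :
    g₁Poly z s u = psiSqrtX s u := by
  rw [g₁Poly, psiSqrtX, alphaTilde_eq hz hu, nu_mul_lam hz hu, invPi_eq hz, sq (sqrtX s),
    mul_div_cancel_right₀ _ (sqrtX_ne_zero hz hu), sqrtX_add_cube_div_eq hz hu]

theorem psiSqrtX_comp_self (hz : z ^ 2 + z + 1 = 0) (hu : u ^ 3 * (s - z) * (s - z ^ 2) ^ 2 = 1) :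
    (psiSqrtX s u).comp (psiSqrtX s u) = (g₁Poly z s u).comp (hPoly z s u) := by
  rw [g₁Poly_eq_psiSqrtX hz hu, hPoly_eq_psiSqrtX hz hu]

theorem psiSqrtY_comp_self (hz : z ^ 2 + z + 1 = 0) (hu : u ^ 3 * (s - z) * (s - z ^ 2) ^ 2 = 1) :
    (psiSqrtY z s u).comp (psiSqrtY z s u) = C (z ^ 2) * (g₂Poly z s u).comp (hPoly z s u) := by
  rw [psiSqrtY, g₂Poly, hPoly_eq_psiSqrtX hz hu, psiSqrtX, mul_sqrtX_add_cube_div_eq hz hu,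
    sq_mul_invPi_div_eq hz hu, betaTilde_eq hz hu, sqrtX_add_cube_div_eq hz hu, sqrtX_eq hz hu]
  apply comp_additive_quartic_eq_C_mul_comp <;> grind

end HayesSquare

theorem stmt18_general {F Ω : Type*} [Field F] [Fintype F] [Field Ω] [Algebra (RatFunc F) Ω]
    (hF : Fintype.card F = 4) (ζ : F) (hζ : ζ ^ 2 + ζ + 1 = 0)
    (s u : Ω) :
    let t : Ω := algebraMap (RatFunc F) Ω RatFunc.X
    let z : Ω := algebraMap (RatFunc F) Ω (RatFunc.C ζ)
    let sx : Ω := (t + 1 + s)⁻¹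
    let sy : Ω := s * sx
    let x : Ω := ((t - z) * (t - z ^ 2))⁻¹
    let y : Ω := t * x
    let ψsx : Polynomial Ω := X ^ 4 + C ((sx + u ^ 3) / u) * X ^ 2 + C sx * X
    let ψsy : Polynomial Ω := C z * X ^ 4 + C ((sy + z * u ^ 3) / u) * X ^ 2 + C sy * X
    let φx : Polynomial Ω := ψsx.comp ψsx
    let φy : Polynomial Ω := ψsy.comp ψsy
    let lam : Ω := z / (u * (s - z ^ 2))
    let ν : Ω := u / (z * (s - z))
    let αt : Ω := -ν * (t - z ^ 2) ^ 2 * (t - z) ^ ((1 : ℤ) - 2) / (z * lam ^ 4) +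
      z ^ 2 * lam / (z - z ^ 2)
    let βt : Ω := -ν * (t - z ^ 2) ^ 2 * (t - z) ^ ((1 : ℤ) - 2) / (z * lam ^ 4) +
      z * lam / (z - z ^ 2)
    let α : Ω := lam ^ 4 / (1 - z ^ ((1 : ℤ) - 2)) + ν * (t - z ^ 2) / (z * lam)
    let h : Polynomial Ω := X ^ 4 + C α * X ^ 2 + C (ν * lam) * X
    let g₁ : Polynomial Ω := X ^ 4 + C αt * X ^ 2 + C (x / (ν * lam)) * X
    let g₂ : Polynomial Ω := X ^ 4 + C βt * X ^ 2 + C (y / (z ^ 2 * ν * lam)) * X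
    s ^ 2 = t → u ^ 3 = ((s - z) * (t - z))⁻¹ →
      ν ^ 3 = -((t - z) * (t - z ^ 2) ^ 2)⁻¹ ∧
        φx = g₁.comp h ∧ φy = C (z ^ 2) * (g₂.comp h) ∧
        lam ^ 5 = ν * (s - z) ^ 3 / (s - z ^ 2) := by
  intro t z sx sy x y ψsx ψsy φx φy lam ν αt βt α h g₁ g₂ hs hu
  have : CharP F 2 := charP_two_of_card_eq_four hF
  have : CharP Ω 2 := charP_of_injective_algebraMap (algebraMap (RatFunc F) Ω).injective 2
  have hz : z ^ 2 + z + 1 = 0 := by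
    simpa [z] using congr(algebraMap (RatFunc F) Ω (RatFunc.C $hζ))
  have htz : t ≠ z := algebraMap_ratFuncX_ne_algebraMap_C ζ
  have htz2 : t ≠ z ^ 2 := by
    convert algebraMap_ratFuncX_ne_algebraMap_C (L := Ω) (ζ ^ 2) using 1
    simp [z]
  clear_value t
  subst hs
  have hu' := HayesSquare.cube_mul_eq_one hz htz htz2 hu
  exact ⟨HayesSquare.nu_pow_three hz hu', HayesSquare.psiSqrtX_comp_self hz hu',
    HayesSquare.psiSqrtY_comp_self hz hu', HayesSquare.lam_pow_five hz hu'⟩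

/-- The example of Section 4.3: for `q = 2`, the square of a Hayes module,
`φ = (ψ_{√x}ψ_{√x}, ψ_{√y}ψ_{√y})`, coincides with the rank two Drinfeld module
`φ^{(λ,ν)}` with `λ = ζ/(u(√t−ζ²))`, `ν = u/(ζ(√t−ζ))`, and its `J`-invariant is
`λ⁵ = ν(√t−ζ)³/(√t−ζ²)`. -/
theorem stmt18 {F Ω : Type*} [Field F] [Fintype F] [Field Ω] [Algebra (RatFunc F) Ω]
    [IsAlgClosed Ω] (hF : Fintype.card F = 4) (ζ : F) (hζ : ζ ^ 2 + ζ + 1 = 0)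
    (s u : Ω) :
    let t : Ω := algebraMap (RatFunc F) Ω RatFunc.X
    let z : Ω := algebraMap (RatFunc F) Ω (RatFunc.C ζ)
    let sx : Ω := (t + 1 + s)⁻¹
    let sy : Ω := s * sx
    let x : Ω := ((t - z) * (t - z ^ 2))⁻¹
    let y : Ω := t * x
    let ψsx : Polynomial Ω := X ^ 4 + C ((sx + u ^ 3) / u) * X ^ 2 + C sx * X
    let ψsy : Polynomial Ω := C z * X ^ 4 + C ((sy + z * u ^ 3) / u) * X ^ 2 + C sy * X
    let φx : Polynomial Ω := ψsx.comp ψsx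
    let φy : Polynomial Ω := ψsy.comp ψsy
    let lam : Ω := z / (u * (s - z ^ 2))
    let ν : Ω := u / (z * (s - z))
    let αt : Ω := -ν * (t - z ^ 2) ^ 2 * (t - z) ^ ((1 : ℤ) - 2) / (z * lam ^ 4) +
      z ^ 2 * lam / (z - z ^ 2)
    let βt : Ω := -ν * (t - z ^ 2) ^ 2 * (t - z) ^ ((1 : ℤ) - 2) / (z * lam ^ 4) +
      z * lam / (z - z ^ 2)
    let α : Ω := lam ^ 4 / (1 - z ^ ((1 : ℤ) - 2)) + ν * (t - z ^ 2) / (z * lam)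
    let h : Polynomial Ω := X ^ 4 + C α * X ^ 2 + C (ν * lam) * X
    let g₁ : Polynomial Ω := X ^ 4 + C αt * X ^ 2 + C (x / (ν * lam)) * X
    let g₂ : Polynomial Ω := X ^ 4 + C βt * X ^ 2 + C (y / (z ^ 2 * ν * lam)) * X
    s ^ 2 = t → u ^ 3 = ((s - z) * (t - z))⁻¹ →
      ν ^ 3 = -((t - z) * (t - z ^ 2) ^ 2)⁻¹ ∧
        φx = g₁.comp h ∧ φy = C (z ^ 2) * (g₂.comp h) ∧
        lam ^ 5 = ν * (s - z) ^ 3 / (s - z ^ 2) :=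
  stmt18_general hF ζ hζ s u
end
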